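/- arXiv:1406.5661 — 9 statements merged into one kernel-verified Lean document; each statement's English description precedes it below -/
import Mathlib

section
/- The only solutions in primes p, q and positive integers a, b to the equation C(p^a, 2) - q^b = 1 (where C denotes the binomial coefficient) are (p,q,a,b) = (2,5,2,1), (3,2,1,1), (2,3,3,3), and (5,3,1,2). -/
private lemma aux1 (i j : ℕ) (h : 2 * 3 ^ i + 1 = 3 ^ j) : i = 0 ∧ j = 1 := by
  have hi : i = 0 := by
    by_contra hi0
    have h1 : 3 ∣ 3 ^ i := dvd_pow_self 3 hi0
    have h3 : 0 < 3 ^ i := Nat.pow_pos (by norm_num)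
    rcases Nat.eq_zero_or_pos j with rfl | hj
    · simp only [pow_zero] at h; omega
    · have h2 : 3 ∣ 3 ^ j := dvd_pow_self 3 (Nat.pos_iff_ne_zero.mp hj)
      omega
  subst hi
  simp only [pow_zero] at h
  have : 3 ^ j = 3 ^ 1 := by omega
  exact ⟨rfl, Nat.pow_right_injective (by norm_num) this⟩

private lemma aux2 (i j : ℕ) (h : 2 * 3 ^ j = 3 ^ i + 1) : i = 0 ∧ j = 0 := by
  have hj : j = 0 := by
    by_contra hj0
    have h1 : 3 ∣ 3 ^ j := dvd_pow_self 3 hj0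
    rcases Nat.eq_zero_or_pos i with rfl | hi
    · simp at h; omega
    · have h2 : 3 ∣ 3 ^ i := dvd_pow_self 3 (Nat.pos_iff_ne_zero.mp hi)
      omega
  subst hj
  simp only [pow_zero] at h
  have hi : 3 ^ i = 3 ^ 0 := by rw [pow_zero]; omega
  exact ⟨Nat.pow_right_injective (by norm_num) hi, rfl⟩

private lemma ppow_eq {p : ℕ} (hp : p.Prime) {a : ℕ} (ha : a ≠ 0) {r c : ℕ} (hr : r.Prime)
    (h : p ^ a = r ^ c) : p = r ∧ a = c := by
  have h1 : p ∣ r ^ c := h ▸ dvd_pow_self p ha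
  have h2 : p = r := (Nat.prime_dvd_prime_iff_eq hp hr).mp (hp.dvd_of_dvd_pow h1)
  subst h2
  exact ⟨rfl, Nat.pow_right_injective hp.two_le h⟩

theorem stmt_0 (p q a b : ℕ) (hp : p.Prime) (hq : q.Prime) (ha : 0 < a) (hb : 0 < b) :
    (p ^ a).choose 2 = q ^ b + 1 ↔
      (p, q, a, b) = (2, 5, 2, 1) ∨ (p, q, a, b) = (3, 2, 1, 1) ∨
      (p, q, a, b) = (2, 3, 3, 3) ∨ (p, q, a, b) = (5, 3, 1, 2) := by
  constructor
  · intro h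
    -- n = p ^ a ≥ 2, write n = m + 2
    have hn2 : 2 ≤ p ^ a := le_trans hp.two_le (Nat.le_self_pow ha.ne' p)
    obtain ⟨m, hm⟩ : ∃ m, p ^ a = m + 2 := ⟨p ^ a - 2, by omega⟩
    rw [hm] at h
    have hc : (m + 2).choose 2 = (m * (m + 3) + 2) / 2 := by
      rw [Nat.choose_two_right]
      congr 1
      have : m + 2 - 1 = m + 1 := by omega
      rw [this]; ring
    rw [hc] at h
    have hdvd : 2 ∣ m * (m + 3) := by
      rcases Nat.even_or_odd m with he | ho
      · exact Dvd.dvd.mul_right he.two_dvd _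
      · have : Even (m + 3) := Odd.add_odd ho (by decide)
        exact Dvd.dvd.mul_left this.two_dvd _
    have key : m * (m + 3) = 2 * q ^ b := by omega
    have hqb : 0 < q ^ b := Nat.pow_pos hq.pos
    have hm1 : 1 ≤ m := by
      rcases Nat.eq_zero_or_pos m with rfl | h'
      · simp at key; omega
      · exact h'
    rcases Nat.even_or_odd m with he | ho
    · -- m even: m = 2k, k ≥ 1, k * (2k+3) = q^b
      obtain ⟨k, rfl⟩ := he.two_dvd
      have hk1 : 1 ≤ k := by omega
      have hk : k * (2 * k + 3) = q ^ b := by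
        have h2 : 2 * (k * (2 * k + 3)) = 2 * q ^ b := by rw [← key]; ring
        omega
      obtain ⟨i, hi, hki⟩ := (Nat.dvd_prime_pow hq).mp ⟨2 * k + 3, hk.symm⟩
      obtain ⟨j, hj, hkj⟩ := (Nat.dvd_prime_pow hq).mp (⟨k, by rw [← hk]; ring⟩ : 2 * k + 3 ∣ q ^ b)
      rcases Nat.eq_zero_or_pos i with rfl | hipos
      · -- k = 1, n = 4, q^b = 5
        simp only [pow_zero] at hki
        subst hki
        have hq5 : q ^ b = 5 ^ 1 := by rw [pow_one]; omega
        obtain ⟨hq5', hb1⟩ := ppow_eq hq hb.ne' (by norm_num) hq5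
        have hp4 : p ^ a = 2 ^ 2 := by rw [hm]; norm_num
        obtain ⟨hp2, ha2⟩ := ppow_eq hp ha.ne' (by norm_num) hp4
        left; simp [hp2, hq5', ha2, hb1]
      · -- i ≥ 1 : q ∣ k and q ∣ 2k+3, so q = 3
        have hqk : q ∣ k := hki ▸ dvd_pow_self q hipos.ne'
        have hk2 : 2 ≤ k := le_trans hq.two_le (hki ▸ Nat.le_self_pow hipos.ne' q)
        have hjpos : 0 < j := by
          rcases Nat.eq_zero_or_pos j with rfl | h'
          · simp only [pow_zero] at hkj; omega
          · exact h'
        have hq2k3 : q ∣ 2 * k + 3 := hkj ▸ dvd_pow_self q hjpos.ne'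
        have hq3 : q ∣ 3 := by
          have := Nat.dvd_sub hq2k3 (Dvd.dvd.mul_left hqk 2)
          simpa using this
        have hq3' : q = 3 := (Nat.prime_dvd_prime_iff_eq hq (by norm_num)).mp hq3
        subst hq3'
        obtain ⟨i', rfl⟩ : ∃ i', i = i' + 1 := ⟨i - 1, by omega⟩
        obtain ⟨j', rfl⟩ : ∃ j', j = j' + 1 := ⟨j - 1, by omega⟩
        rw [pow_succ] at hki hkj
        have heq : 2 * 3 ^ i' + 1 = 3 ^ j' := by omega
        obtain ⟨hi0, hj1⟩ := aux1 _ _ heq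
        subst hi0; subst hj1
        -- k = 3, n = 8, q^b = 27
        have hk3 : k = 3 := by simpa using hki
        subst hk3
        have hp8 : p ^ a = 2 ^ 3 := by rw [hm]; norm_num
        obtain ⟨hp2, ha3⟩ := ppow_eq hp ha.ne' (by norm_num) hp8
        have hb3 : 3 ^ b = 3 ^ 3 := by omega
        have hb3' := Nat.pow_right_injective (by norm_num) hb3
        right; right; left; simp [hp2, ha3, hb3']
    · -- m odd: m = 2k+1, (2k+1)*(k+2) = q^b
      obtain ⟨k, rfl⟩ := ho
      have hk : (2 * k + 1) * (k + 2) = q ^ b := by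
        have h2 : 2 * ((2 * k + 1) * (k + 2)) = 2 * q ^ b := by rw [← key]; ring
        omega
      obtain ⟨i, hi, hki⟩ := (Nat.dvd_prime_pow hq).mp ⟨k + 2, hk.symm⟩
      obtain ⟨j, hj, hkj⟩ := (Nat.dvd_prime_pow hq).mp (⟨2 * k + 1, by rw [← hk]; ring⟩ : k + 2 ∣ q ^ b)
      rcases Nat.eq_zero_or_pos k with rfl | hkpos
      · -- k = 0: n = 3, q^b = 2
        have hq2 : q ^ b = 2 ^ 1 := by rw [pow_one]; omega
        obtain ⟨hq2', hb1⟩ := ppow_eq hq hb.ne' (by norm_num) hq2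
        have hp3 : p ^ a = 3 ^ 1 := by rw [hm]; norm_num
        obtain ⟨hp3', ha1⟩ := ppow_eq hp ha.ne' (by norm_num) hp3
        right; left; simp [hp3', hq2', ha1, hb1]
      · -- k ≥ 1
        have hipos : 0 < i := by
          rcases Nat.eq_zero_or_pos i with rfl | h'
          · simp at hki; omega
          · exact h'
        have hjpos : 0 < j := by
          rcases Nat.eq_zero_or_pos j with rfl | h'
          · simp only [pow_zero] at hkj; omega
          · exact h'
        have hqi : q ∣ 2 * k + 1 := hki ▸ dvd_pow_self q hipos.ne'
        have hqj : q ∣ k + 2 := hkj ▸ dvd_pow_self q hjpos.ne'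
        have hq3 : q ∣ 3 := by
          have := Nat.dvd_sub (Dvd.dvd.mul_left hqj 2) hqi
          have h3 : 2 * (k + 2) - (2 * k + 1) = 3 := by omega
          rwa [h3] at this
        have hq3' : q = 3 := (Nat.prime_dvd_prime_iff_eq hq (by norm_num)).mp hq3
        subst hq3'
        obtain ⟨i', rfl⟩ : ∃ i', i = i' + 1 := ⟨i - 1, by omega⟩
        obtain ⟨j', rfl⟩ : ∃ j', j = j' + 1 := ⟨j - 1, by omega⟩
        rw [pow_succ] at hki hkj
        have heq : 2 * 3 ^ j' = 3 ^ i' + 1 := by omega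
        obtain ⟨hi0, hj0⟩ := aux2 _ _ heq
        subst hi0; subst hj0
        -- k = 1, n = 5, q^b = 9
        have hk1 : k = 1 := by simpa using hkj
        subst hk1
        have hp5 : p ^ a = 5 ^ 1 := by rw [hm]; norm_num
        obtain ⟨hp5', ha1⟩ := ppow_eq hp ha.ne' (by norm_num) hp5
        have hb2 : 3 ^ b = 3 ^ 2 := by omega
        have hb2' := Nat.pow_right_injective (by norm_num) hb2
        right; right; right; simp [hp5', ha1, hb2']
  · rintro (h | h | h | h) <;>
      (injection h with h1 h2; injection h2 with h2 h3; injection h3 with h3 h4;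
       subst h1; subst h2; subst h3; subst h4; decide)
end

section
/- The only solutions in primes p, q and positive integers a, b to the equation C(p^a, 3) - q^b = 1 are (p,q,a,b) = (2,3,2,1), (3,83,2,1), and (5,3,1,2). -/
private lemma two_primes {p a V r s : ℕ} (hp : p.Prime) (hr : r.Prime) (hs : s.Prime)
    (hrs : r ≠ s) (hrV : r ∣ V) (hsV : s ∣ V) (h : p ^ a = V) : False := by
  have h1 : r ∣ p := hr.dvd_of_dvd_pow (h ▸ hrV)
  have h2 : s ∣ p := hs.dvd_of_dvd_pow (h ▸ hsV)
  have e1 := (Nat.prime_dvd_prime_iff_eq hr hp).mp h1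
  have e2 := (Nat.prime_dvd_prime_iff_eq hs hp).mp h2
  omega

private lemma prime_pow_eq {p a r e : ℕ} (hp : p.Prime) (hr : r.Prime) (ha : 0 < a)
    (h : p ^ a = r ^ e) : p = r ∧ a = e := by
  have h1 : p ∣ r ^ e := h ▸ dvd_pow_self p ha.ne'
  have he : e ≠ 0 := by
    rintro rfl
    rw [pow_zero] at h
    exact hp.one_lt.ne' ((pow_eq_one_iff.mp h).resolve_right ha.ne')
  have h2 : p ∣ r := hp.dvd_of_dvd_pow h1
  have hpr : p = r := (Nat.prime_dvd_prime_iff_eq hp hr).mp h2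
  subst hpr
  exact ⟨rfl, Nat.pow_right_injective hp.two_le h⟩

theorem stmt_1 (p q a b : ℕ) (hp : p.Prime) (hq : q.Prime) (ha : 0 < a) (hb : 0 < b) :
    (p ^ a).choose 3 = q ^ b + 1 ↔
      (p, q, a, b) = (2, 3, 2, 1) ∨ (p, q, a, b) = (3, 83, 2, 1) ∨
      (p, q, a, b) = (5, 3, 1, 2) := by
  constructor
  · intro h
    have hq1 : 1 ≤ q ^ b := Nat.one_le_pow _ _ hq.pos
    have hn4 : 4 ≤ p ^ a := by
      by_contra hc
      push_neg at hc
      have h1 : (p ^ a).choose 3 ≤ (3).choose 3 := Nat.choose_le_choose 3 (by omega)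
      simp [Nat.choose] at h1
      omega
    obtain ⟨m, hm⟩ : ∃ m, p ^ a = m + 4 := ⟨p ^ a - 4, by omega⟩
    rw [hm] at h
    have hkey : 6 * ((m+4).choose 3) = (m+4)*(m+3)*(m+2) := by
      have h2 := Nat.descFactorial_eq_factorial_mul_choose (m+4) 3
      simp [Nat.descFactorial, Nat.factorial] at h2
      ring_nf at h2 ⊢
      omega
    have h6 : 6 * q ^ b = (m+1) * (m^2 + 8*m + 18) := by
      have hr : (m+4)*(m+3)*(m+2) = (m+1) * (m^2 + 8*m + 18) + 6 := by ring
      omega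
    have hB : m^2 + 8*m + 18 = (m+1)*(m+7) + 11 := by ring
    have hBpos : 0 < m^2 + 8*m + 18 := by positivity
    by_cases h11 : 11 ∣ m + 1
    · -- case 11 | m+1 : q = 11, derive contradictions
      exfalso
      have p11 : Nat.Prime 11 := by norm_num
      have h11B : 11 ∣ m^2 + 8*m + 18 := by
        rw [hB]; exact Dvd.dvd.add (h11.mul_right _) dvd_rfl
      have hq11 : q = 11 := by
        have hd : 11 ∣ 6 * q ^ b := h6 ▸ Dvd.dvd.mul_right h11 _
        rcases (Nat.Prime.dvd_mul p11).mp hd with h' | h'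
        · omega
        · exact ((Nat.prime_dvd_prime_iff_eq p11 hq).mp (p11.dvd_of_dvd_pow h')).symm
      subst hq11
      obtain ⟨k, hk⟩ := h11
      obtain ⟨c, hc⟩ := h11B
      have hkpos : 0 < k := by omega
      have hcpos : 0 < c := by omega
      have h6' : 6 * 11 ^ b = 121 * (k * c) := by
        rw [h6, hk, hc]; ring
      have hb2 : 2 ≤ b := by
        rcases Nat.lt_or_ge b 2 with hlt | hge
        · exfalso
          have hb1 : b = 1 := by omega
          subst hb1
          have h1 : 121 ≤ 121 * (k * c) :=
            Nat.le_mul_of_pos_right 121 (by positivity)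
          rw [pow_one] at h6'
          omega
        · exact hge
      obtain ⟨b', rfl⟩ : ∃ b', b = b' + 2 := ⟨b - 2, by omega⟩
      have h6'' : 6 * 11 ^ b' = k * c := by
        refine Nat.eq_of_mul_eq_mul_left (show 0 < 121 by norm_num) ?_
        calc 121 * (6 * 11 ^ b') = 6 * (11 ^ b' * 11 ^ 2) := by ring
        _ = 6 * 11 ^ (b' + 2) := by rw [← pow_add]
        _ = 121 * (k * c) := h6'
      by_cases hk11 : 11 ∣ k
      · -- 121 | m+1, so m huge; show c ≤ 6 gives contradiction
        have hc11 : ¬ 11 ∣ c := by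
          intro hcc
          have h1 : (121 : ℕ) ∣ (m+1) := by
            obtain ⟨k', hk'⟩ := hk11
            exact ⟨k', by omega⟩
          have h2 : (121 : ℕ) ∣ (m+1)*(m+7) + 11 := by
            obtain ⟨c', hc'⟩ := hcc
            exact ⟨c', by rw [← hB, hc, hc']; ring⟩
          have h3 : (121 : ℕ) ∣ (m+1)*(m+7) := h1.mul_right _
          have h4 : (121 : ℕ) ∣ 11 := by
            have h5 := Nat.dvd_sub h2 h3
            rwa [Nat.add_sub_cancel_left] at h5
          norm_num at h4
        have hcop : Nat.Coprime c (11 ^ b') :=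
          Nat.Coprime.pow_right _ (((p11.coprime_iff_not_dvd).mpr hc11).symm)
        have hcd : c ∣ 6 * 11 ^ b' := ⟨k, by rw [h6'']; ring⟩
        have hc6 : c ∣ 6 := hcop.dvd_of_dvd_mul_right hcd
        have hc6' : c ≤ 6 := Nat.le_of_dvd (by norm_num) hc6
        have hm120 : 121 ≤ m + 1 := by
          obtain ⟨k', hk'⟩ := hk11
          have hk'pos : 0 < k' := by
            rcases Nat.eq_zero_or_pos k' with h' | h'
            · omega
            · exact h'
          omega
        nlinarith
      · -- 11 ∤ k : k | 6
        have hcop : Nat.Coprime k (11 ^ b') :=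
          Nat.Coprime.pow_right _ (((p11.coprime_iff_not_dvd).mpr hk11).symm)
        have hkd : k ∣ 6 * 11 ^ b' := ⟨c, h6''⟩
        have hk6 : k ∣ 6 := hcop.dvd_of_dvd_mul_right hkd
        have hk6' : k ≤ 6 := Nat.le_of_dvd (by norm_num) hk6
        interval_cases k
        · -- m = 10, p^a = 14
          have hm' : m = 10 := by omega
          subst hm'
          exact two_primes hp (by norm_num) (by norm_num) (by norm_num : (2:ℕ) ≠ 7)
            (by norm_num) (by norm_num) hm
        · -- m = 21, p^a = 25, 11^b' = 19
          have hm' : m = 21 := by omega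
          subst hm'
          have hc57 : c = 57 := by omega
          subst hc57
          have h19 : 11 ^ b' = 19 := by omega
          rcases Nat.eq_zero_or_pos b' with hz | hz
          · rw [hz] at h19; norm_num at h19
          · have hd19 : (11:ℕ) ∣ 19 := h19 ▸ dvd_pow_self 11 hz.ne'
            norm_num at hd19
        · -- m = 32, p^a = 36
          have hm' : m = 32 := by omega
          subst hm'
          exact two_primes hp (by norm_num) (by norm_num) (by norm_num : (2:ℕ) ≠ 3)
            (by norm_num) (by norm_num) hm
        · exact absurd hk6 (by norm_num)
        · exact absurd hk6 (by norm_num)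
        · -- m = 65, p^a = 69
          have hm' : m = 65 := by omega
          subst hm'
          exact two_primes hp (by norm_num) (by norm_num) (by norm_num : (3:ℕ) ≠ 23)
            (by norm_num) (by norm_num) hm
    · -- case 11 ∤ m+1 : coprime, m+1 | 6
      have hcopAB : Nat.Coprime (m+1) (m^2 + 8*m + 18) := by
        have hd : Nat.gcd (m+1) (m^2+8*m+18) ∣ 11 := by
          have h1 : Nat.gcd (m+1) (m^2+8*m+18) ∣ (m+1)*(m+7) :=
            (Nat.gcd_dvd_left _ _).mul_right _
          have h2 := Nat.dvd_sub (Nat.gcd_dvd_right (m+1) (m^2+8*m+18)) h1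
          have h3 : m^2+8*m+18 - (m+1)*(m+7) = 11 := by
            rw [hB, Nat.add_sub_cancel_left]
          rwa [h3] at h2
        rcases (Nat.dvd_prime (by norm_num)).mp hd with h' | h'
        · exact h'
        · exact absurd (h' ▸ Nat.gcd_dvd_left (m+1) (m^2+8*m+18)) h11
      have hqB : q ∣ m^2 + 8*m + 18 := by
        by_contra hc
        have hcop : Nat.Coprime (m^2+8*m+18) (q ^ b) :=
          Nat.Coprime.pow_right _ ((hq.coprime_iff_not_dvd.mpr hc).symm)
        have hBd : (m^2+8*m+18) ∣ 6 * q ^ b := ⟨m+1, by rw [h6]; ring⟩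
        have hB6 : (m^2+8*m+18) ∣ 6 := hcop.dvd_of_dvd_mul_right hBd
        have := Nat.le_of_dvd (by norm_num) hB6
        nlinarith
      have hqA : ¬ q ∣ m + 1 := by
        intro hc
        have hg : q ∣ Nat.gcd (m+1) (m^2+8*m+18) := Nat.dvd_gcd hc hqB
        rw [hcopAB] at hg
        exact absurd (Nat.le_of_dvd one_pos hg) (by have := hq.two_le; omega)
      have hcopA : Nat.Coprime (m+1) (q ^ b) :=
        Nat.Coprime.pow_right _ ((hq.coprime_iff_not_dvd.mpr hqA).symm)
      have hAd : (m+1) ∣ 6 * q ^ b := ⟨m^2+8*m+18, h6⟩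
      have hA6 : (m+1) ∣ 6 := hcopA.dvd_of_dvd_mul_right hAd
      have hA6' : m + 1 ≤ 6 := Nat.le_of_dvd (by norm_num) hA6
      have hm5 : m ≤ 5 := by omega
      interval_cases m
      · -- m = 0 : p^a = 4, q^b = 3
        have hqb : q ^ b = 3 := by norm_num at h6; omega
        have hq3 := prime_pow_eq hq (by norm_num) hb
          (show q ^ b = 3 ^ 1 by rw [hqb, pow_one])
        have hp2 := prime_pow_eq hp (by norm_num) ha
          (show p ^ a = 2 ^ 2 by rw [hm]; norm_num)
        left
        simp only [Prod.mk.injEq]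
        omega
      · -- m = 1 : p^a = 5, q^b = 9
        have hqb : q ^ b = 9 := by norm_num at h6; omega
        have hq3 := prime_pow_eq hq (by norm_num) hb
          (show q ^ b = 3 ^ 2 by rw [hqb]; norm_num)
        have hp5 := prime_pow_eq hp (by norm_num) ha
          (show p ^ a = 5 ^ 1 by rw [hm]; norm_num)
        right; right
        simp only [Prod.mk.injEq]
        omega
      · -- m = 2 : p^a = 6, impossible
        exact absurd hm (by
          intro hc
          exact two_primes hp (by norm_num) (by norm_num) (by norm_num : (2:ℕ) ≠ 3)
            (by norm_num) (by norm_num) hc)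
      · exact absurd hA6 (by norm_num)
      · exact absurd hA6 (by norm_num)
      · -- m = 5 : p^a = 9, q^b = 83
        have hqb : q ^ b = 83 := by norm_num at h6; omega
        have hq83 := prime_pow_eq hq (by norm_num) hb
          (show q ^ b = 83 ^ 1 by rw [hqb, pow_one])
        have hp3 := prime_pow_eq hp (by norm_num) ha
          (show p ^ a = 3 ^ 2 by rw [hm]; norm_num)
        right; left
        simp only [Prod.mk.injEq]
        omega
  · rintro (h | h | h) <;>
      simp only [Prod.mk.injEq] at h <;>
      obtain ⟨h1, h2, h3, h4⟩ := h <;>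
      subst h1 <;> subst h2 <;> subst h3 <;> subst h4 <;> decide
end

section
/- The only solutions in primes p, q and positive integers a, b to the equation C(p^a, 4) - q^b = 1 are (p,q,a,b) = (5,2,1,2) and (3,5,2,3). -/
private lemma cop_dvd {d c r k : ℕ} (hr : r.Prime) (hd : ¬ r ∣ d) (h : d ∣ c * r ^ k) :
    d ∣ c :=
  (Nat.Coprime.pow_right k ((hr.coprime_iff_not_dvd.mpr hd).symm)).dvd_of_dvd_mul_right h

private lemma ch4 (m : ℕ) : 24 * (m+5).choose 4 = (m+5)*(m+4)*(m+3)*(m+2) := by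
  have h := Nat.descFactorial_eq_factorial_mul_choose (m+5) 4
  rw [show Nat.factorial 4 = 24 from rfl] at h
  rw [← h]
  simp [Nat.descFactorial]
  ring

private lemma prime_eq {q r : ℕ} (hq : q.Prime) (hr : r.Prime) (h : q ∣ r) : q = r :=
  (Nat.prime_dvd_prime_iff_eq hq hr).mp h

set_option maxHeartbeats 1000000 in
theorem stmt_2 (p q a b : ℕ) (hp : p.Prime) (hq : q.Prime) (ha : 0 < a) (hb : 0 < b) :
    (p ^ a).choose 4 = q ^ b + 1 ↔
      (p, q, a, b) = (5, 2, 1, 2) ∨ (p, q, a, b) = (3, 5, 2, 3) := by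
  constructor
  · intro h
    have hqb : 1 < q ^ b := Nat.one_lt_pow hb.ne' hq.one_lt
    have h5 : 5 ≤ p ^ a := by
      by_contra hc
      push_neg at hc
      have hmono : (p ^ a).choose 4 ≤ (4).choose 4 := Nat.choose_mono 4 (by omega)
      rw [h] at hmono
      have h44 : (4:ℕ).choose 4 = 1 := rfl
      omega
    obtain ⟨m, hm⟩ : ∃ m, p ^ a = m + 5 := ⟨p ^ a - 5, by omega⟩
    rw [hm] at h
    have hch := ch4 m
    rw [h] at hch
    have hring : (m+5)*(m+4)*(m+3)*(m+2) = (m+6)*((m+1)*(m^2+7*m+16)) + 24 := by ring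
    have E : 24 * q ^ b = (m+6)*((m+1)*(m^2+7*m+16)) := by
      rw [hring] at hch; linarith
    have hC10 : (m^2+7*m+16) - (m+6)*(m+1) = 10 := by
      have : (m+6)*(m+1) = m^2+7*m+6 := by ring
      omega
    by_cases hq2' : q = 2
    · subst hq2'
      rcases Nat.mod_two_eq_zero_or_one m with hmod | hmod
      · -- m even, so m+1 is the odd factor, must divide 3
        have hB : ¬ (2:ℕ) ∣ (m+1) := by omega
        have hdvd : (m+1) ∣ 3 * 2 ^ (b+3) :=
          ⟨(m+6)*(m^2+7*m+16), by rw [show (3:ℕ) * 2^(b+3) = 24 * 2^b by ring, E]; ring⟩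
        have hdvd3 : (m+1) ∣ 3 := cop_dvd Nat.prime_two hB hdvd
        have hle : m ≤ 2 := by
          have := Nat.le_of_dvd (by norm_num) hdvd3; omega
        interval_cases m
        · -- m = 0 : the solution (5,2,1,2)
          norm_num at E
          have h4 : (2:ℕ)^b = 4 := by linarith
          have hb2 : b = 2 := by
            have h22 : (2:ℕ)^b = 2^2 := by norm_num [h4]
            exact Nat.pow_right_injective (by norm_num) h22
          have hd : p ∣ 5 := by
            have := dvd_pow_self p ha.ne'
            rw [hm] at this; simpa using this
          have hp5 : p = 5 := prime_eq hp (by norm_num) hd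
          have ha1 : a = 1 := by
            rw [hp5] at hm
            have hma : (5:ℕ)^a = 5^1 := by simpa using hm
            exact Nat.pow_right_injective (by norm_num) hma
          left; subst hp5; subst ha1; subst hb2; rfl
        · omega
        · -- m = 2 : q^b = 34, impossible
          norm_num at E
          have h4 : (2:ℕ)^b = 34 := by linarith
          have h17 : (17:ℕ) ∣ 2 := Nat.Prime.dvd_of_dvd_pow (by norm_num)
            (show (17:ℕ) ∣ 2^b by rw [h4]; norm_num)
          norm_num at h17
      · -- m odd, so m+6 is the odd factor, must divide 3: impossible
        have hA : ¬ (2:ℕ) ∣ (m+6) := by omega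
        have hdvd : (m+6) ∣ 3 * 2 ^ (b+3) :=
          ⟨(m+1)*(m^2+7*m+16), by rw [show (3:ℕ) * 2^(b+3) = 24 * 2^b by ring, E]⟩
        have hdvd3 : (m+6) ∣ 3 := cop_dvd Nat.prime_two hA hdvd
        have := Nat.le_of_dvd (by norm_num) hdvd3
        omega
    · by_cases hq3' : q = 3
      · subst hq3'
        have h3m : m % 3 = 0 ∨ m % 3 = 1 ∨ m % 3 = 2 := by omega
        rcases h3m with hmod | hmod | hmod
        · -- 3 ∣ m+6, so (m+1)*(m^2+7m+16) ∣ 24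
          have hB : ¬ (3:ℕ) ∣ (m+1) := by omega
          have hC : ¬ (3:ℕ) ∣ (m^2+7*m+16) := by
            intro hdC
            have h1 : (3:ℕ) ∣ (m+6) := by omega
            have h2 : (3:ℕ) ∣ (m+6)*(m+1) := h1.mul_right _
            have h3 := Nat.dvd_sub hdC h2
            rw [hC10] at h3
            norm_num at h3
          have hBC : ¬ (3:ℕ) ∣ (m+1)*(m^2+7*m+16) := by
            intro hdd
            rcases (Nat.Prime.dvd_mul (by norm_num)).mp hdd with h' | h' <;> tauto
          have hdvd : (m+1)*(m^2+7*m+16) ∣ 24 * 3 ^ b := ⟨(m+6), by rw [E]; ring⟩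
          have h24 := cop_dvd Nat.prime_three hBC hdvd
          have hle := Nat.le_of_dvd (by norm_num) h24
          have hm0 : m = 0 := by nlinarith
          subst hm0
          norm_num at h24
        · -- 3 ∣ m^2+7m+16, so (m+6)*(m+1) ∣ 24
          have hA : ¬ (3:ℕ) ∣ (m+6) := by omega
          have hB : ¬ (3:ℕ) ∣ (m+1) := by omega
          have hAB : ¬ (3:ℕ) ∣ (m+6)*(m+1) := by
            intro hdd
            rcases (Nat.Prime.dvd_mul (by norm_num)).mp hdd with h' | h' <;> tauto
          have hdvd : (m+6)*(m+1) ∣ 24 * 3 ^ b := ⟨(m^2+7*m+16), by rw [E]; ring⟩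
          have h24 := cop_dvd Nat.prime_three hAB hdvd
          have hle := Nat.le_of_dvd (by norm_num) h24
          have hm2 : m ≤ 2 := by nlinarith
          interval_cases m
          · omega
          · norm_num at h24
          · omega
        · -- 3 ∣ m+1, so (m+6)*(m^2+7m+16) ∣ 24 : impossible
          have hA : ¬ (3:ℕ) ∣ (m+6) := by omega
          have hC : ¬ (3:ℕ) ∣ (m^2+7*m+16) := by
            intro hdC
            have h1 : (3:ℕ) ∣ (m+1) := by omega
            have h2 : (3:ℕ) ∣ (m+6)*(m+1) := h1.mul_left _
            have h3 := Nat.dvd_sub hdC h2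
            rw [hC10] at h3
            norm_num at h3
          have hAC : ¬ (3:ℕ) ∣ (m+6)*(m^2+7*m+16) := by
            intro hdd
            rcases (Nat.Prime.dvd_mul (by norm_num)).mp hdd with h' | h' <;> tauto
          have hdvd : (m+6)*(m^2+7*m+16) ∣ 24 * 3 ^ b := ⟨(m+1), by rw [E]; ring⟩
          have h24 := cop_dvd Nat.prime_three hAC hdvd
          have hle := Nat.le_of_dvd (by norm_num) h24
          nlinarith
      · by_cases hq5' : q = 5
        · subst hq5'
          -- must have m ≡ 4 mod 5
          have h5d : (5:ℕ) ∣ (m+6)*((m+1)*(m^2+7*m+16)) := by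
            rw [← E]
            exact Dvd.dvd.mul_left (dvd_pow_self 5 hb.ne') 24
          have hm4 : m % 5 = 4 := by
            rcases (Nat.Prime.dvd_mul (by norm_num)).mp h5d with h1 | h1
            · omega
            rcases (Nat.Prime.dvd_mul (by norm_num)).mp h1 with h2 | h2
            · omega
            · have h10 : (5:ℕ) ∣ 10 := by norm_num
              have h3 := Nat.dvd_sub h2 h10
              have he : m^2+7*m+16 - 10 = (m+6)*(m+1) := by
                have : (m+6)*(m+1) = m^2+7*m+6 := by ring
                omega
              rw [he] at h3
              rcases (Nat.Prime.dvd_mul (by norm_num)).mp h3 with h4 | h4 <;> omega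
          obtain ⟨k, rfl⟩ : ∃ k, m = 5*k+4 := ⟨m/5, by omega⟩
          have E2 : 24 * 5 ^ b = 125 * ((k+2)*((k+1)*(5*k^2+15*k+12))) := by
            rw [E]; ring
          have h125 : (5:ℕ)^3 ∣ 5 ^ b := by
            have hd : (5:ℕ)^3 ∣ 24 * 5^b :=
              ⟨(k+2)*((k+1)*(5*k^2+15*k+12)), by rw [E2]; norm_num⟩
            exact (Nat.Coprime.dvd_of_dvd_mul_left (by decide) hd)
          have hb3 : 3 ≤ b := (Nat.pow_dvd_pow_iff_le_right (by norm_num : (1:ℕ) < 5)).mp h125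
          obtain ⟨c, rfl⟩ : ∃ c, b = c + 3 := ⟨b - 3, by omega⟩
          have E3 : 24 * 5 ^ c = (k+2)*((k+1)*(5*k^2+15*k+12)) := by
            have h' : (125:ℕ) * (24 * 5 ^ c) = 125 * ((k+2)*((k+1)*(5*k^2+15*k+12))) := by
              rw [← E2]; ring
            exact Nat.eq_of_mul_eq_mul_left (by norm_num) h'
          have hC5 : ¬ (5:ℕ) ∣ (5*k^2+15*k+12) := by
            intro hd
            have h1 : (5:ℕ) ∣ 5*(k^2+3*k) := ⟨_, rfl⟩
            have h2 := Nat.dvd_sub hd h1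
            have he : 5*k^2+15*k+12 - 5*(k^2+3*k) = 12 := by
              have : 5*(k^2+3*k) = 5*k^2+15*k := by ring
              omega
            rw [he] at h2
            norm_num at h2
          have hdvd : (5*k^2+15*k+12) ∣ 24 * 5 ^ c := ⟨(k+2)*(k+1), by rw [E3]; ring⟩
          have h24 := cop_dvd (by norm_num : Nat.Prime 5) hC5 hdvd
          have hle := Nat.le_of_dvd (by norm_num) h24
          have hk0 : k = 0 := by nlinarith
          subst hk0
          have hc0 : c = 0 := by
            have h2 : (24:ℕ) * 5^c = 24 := by rw [E3]; norm_num
            have h1 : (5:ℕ)^c = 1 := by linarith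
            have h0 : (5:ℕ)^c = 5^0 := by simpa using h1
            exact Nat.pow_right_injective (by norm_num) h0
          subst hc0
          have hd : p ∣ 3^2 := by
            have := dvd_pow_self p ha.ne'
            rw [hm] at this
            simpa using this
          have hp3 : p = 3 := prime_eq hp (by norm_num) (hp.dvd_of_dvd_pow hd)
          have ha2 : a = 2 := by
            rw [hp3] at hm
            have hma : (3:ℕ)^a = 3^2 := by norm_num at hm ⊢; exact hm
            exact Nat.pow_right_injective (by norm_num) hma
          right; subst hp3; subst ha2; rfl
        · -- q ∉ {2,3,5}
          have hq10 : ¬ q ∣ 10 := by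
            intro hd
            rw [show (10:ℕ) = 2*5 by norm_num] at hd
            rcases (Nat.Prime.dvd_mul hq).mp hd with h' | h'
            · exact hq2' (prime_eq hq (by norm_num) h')
            · exact hq5' (prime_eq hq (by norm_num) h')
          have hAB : q ∣ (m+6) → q ∣ (m+1) → False := by
            intro h1 h2
            have h3 := Nat.dvd_sub h1 h2
            rw [show m+6-(m+1) = 5 by omega] at h3
            exact hq5' (prime_eq hq (by norm_num) h3)
          have hpairC : q ∣ (m+6)*(m+1) → q ∣ (m^2+7*m+16) → False := by
            intro h1 h2
            have h3 := Nat.dvd_sub h2 h1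
            rw [hC10] at h3
            exact hq10 h3
          by_cases hdA : q ∣ (m+6)
          · -- ¬ q ∣ m+1, ¬ q ∣ C : (m+1)*C ∣ 24
            have hB : ¬ q ∣ (m+1) := fun h' => hAB hdA h'
            have hC : ¬ q ∣ (m^2+7*m+16) := fun h' => hpairC (hdA.mul_right _) h'
            have hBC : ¬ q ∣ (m+1)*(m^2+7*m+16) := by
              intro hdd
              rcases (Nat.Prime.dvd_mul hq).mp hdd with h' | h' <;> tauto
            have hdvd : (m+1)*(m^2+7*m+16) ∣ 24 * q ^ b := ⟨(m+6), by rw [E]; ring⟩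
            have h24 := cop_dvd hq hBC hdvd
            have hle := Nat.le_of_dvd (by norm_num) h24
            have hm0 : m = 0 := by nlinarith
            subst hm0
            norm_num at h24
          · by_cases hdB : q ∣ (m+1)
            · -- ¬ q ∣ A, ¬ q ∣ C : A*C ∣ 24, impossible
              have hC : ¬ q ∣ (m^2+7*m+16) := fun h' => hpairC (hdB.mul_left _) h'
              have hAC : ¬ q ∣ (m+6)*(m^2+7*m+16) := by
                intro hdd
                rcases (Nat.Prime.dvd_mul hq).mp hdd with h' | h' <;> tauto
              have hdvd : (m+6)*(m^2+7*m+16) ∣ 24 * q ^ b := ⟨(m+1), by rw [E]; ring⟩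
              have h24 := cop_dvd hq hAC hdvd
              have hle := Nat.le_of_dvd (by norm_num) h24
              nlinarith
            · -- ¬ q ∣ A, ¬ q ∣ B : A*B ∣ 24, so m ≤ 2
              have hABd : ¬ q ∣ (m+6)*(m+1) := by
                intro hdd
                rcases (Nat.Prime.dvd_mul hq).mp hdd with h' | h' <;> tauto
              have hdvd : (m+6)*(m+1) ∣ 24 * q ^ b := ⟨(m^2+7*m+16), by rw [E]; ring⟩
              have h24 := cop_dvd hq hABd hdvd
              have hle := Nat.le_of_dvd (by norm_num) h24
              have hm2 : m ≤ 2 := by nlinarith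
              interval_cases m
              · norm_num at E
                have h4 : q^b = 4 := by linarith
                have h2d : (2:ℕ) ∣ q := Nat.Prime.dvd_of_dvd_pow Nat.prime_two
                  (show (2:ℕ) ∣ q^b by rw [h4]; norm_num)
                exact absurd ((prime_eq Nat.prime_two hq h2d).symm) hq2'
              · norm_num at E
                have h4 : q^b = 14 := by linarith
                have h2d : (2:ℕ) ∣ q := Nat.Prime.dvd_of_dvd_pow Nat.prime_two
                  (show (2:ℕ) ∣ q^b by rw [h4]; norm_num)
                exact absurd ((prime_eq Nat.prime_two hq h2d).symm) hq2'
              · norm_num at E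
                have h4 : q^b = 34 := by linarith
                have h2d : (2:ℕ) ∣ q := Nat.Prime.dvd_of_dvd_pow Nat.prime_two
                  (show (2:ℕ) ∣ q^b by rw [h4]; norm_num)
                exact absurd ((prime_eq Nat.prime_two hq h2d).symm) hq2'
  · intro h
    rcases h with h | h <;> simp only [Prod.mk.injEq] at h <;>
      obtain ⟨rfl, rfl, rfl, rfl⟩ := h <;> decide
end

section
/- There are no primes p, q and positive integer b satisfying p^3 - q^b(q^b-1)/2 = 1. -/
set_option maxHeartbeats 1600000


theorem stmt_4 : ¬ ∃ (p q b : ℕ), p.Prime ∧ q.Prime ∧ 0 < b ∧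
    p ^ 3 = (q ^ b).choose 2 + 1 := by
  rintro ⟨p, q, b, hp, hq, hb, heq⟩
  have hn2 : 2 ≤ q ^ b := Nat.one_lt_pow hb.ne' hq.one_lt
  -- basic equation : n*(n-1) + 2 = 2*p^3
  have hev : 2 ∣ q ^ b * (q ^ b - 1) := by
    have h := Nat.even_mul_succ_self (q ^ b - 1)
    rw [Nat.sub_add_cancel (by omega : 1 ≤ q ^ b)] at h
    rw [mul_comm]
    exact h.two_dvd
  have h2c : 2 * (q ^ b).choose 2 = q ^ b * (q ^ b - 1) := by
    rw [Nat.choose_two_right]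
    exact Nat.mul_div_cancel' hev
  have hkey : q ^ b * (q ^ b - 1) + 2 = 2 * p ^ 3 := by
    rw [heq]; omega
  obtain ⟨v, hnv⟩ : ∃ v, q ^ b = v + 1 := ⟨q ^ b - 1, by omega⟩
  have hv1 : 1 ≤ v := by omega
  have hkey' : (v + 1) * v + 2 = 2 * p ^ 3 := by
    rw [hnv] at hkey
    simpa using hkey
  -- case p = 2
  by_cases hp2 : p = 2
  · subst hp2
    have h14 : (v + 1) * v = 14 := by linarith [hkey']
    rcases le_or_gt v 3 with h | h
    · have : (v + 1) * v ≤ 4 * 3 := Nat.mul_le_mul (by omega) (by omega)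
      linarith
    · have : 5 * 4 ≤ (v + 1) * v := Nat.mul_le_mul (by omega) (by omega)
      linarith
  have hpodd : Odd p := hp.odd_of_ne_two hp2
  obtain ⟨w, rfl⟩ : ∃ w, p = w + 1 := ⟨p - 1, by have := hp.two_le; omega⟩
  have hw2 : 2 ≤ w := by
    rcases hpodd with ⟨j, hj⟩
    have := hp.two_le
    omega
  have hwe : 2 ∣ w := by rcases hpodd with ⟨j, hj⟩; omega
  have hAB : (v + 1) * v = 2 * (w * (w ^ 2 + 3 * w + 3)) := by
    have hr : 2 * (w + 1) ^ 3 = 2 * (w * (w ^ 2 + 3 * w + 3)) + 2 := by ring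
    linarith [hkey']
  -- case q = 2
  by_cases hq2 : q = 2
  · subst hq2
    obtain ⟨d, rfl⟩ : ∃ d, b = d + 1 := ⟨b - 1, by omega⟩
    have hveq : v + 1 = 2 * 2 ^ d := by
      rw [← hnv]; ring
    rw [hveq] at hAB
    have hmv : 2 ^ d * v = w * (w ^ 2 + 3 * w + 3) :=
      Nat.eq_of_mul_eq_mul_left two_pos (by linarith [hAB])
    have hBodd : Odd (w ^ 2 + 3 * w + 3) := by
      obtain ⟨a, rfl⟩ := hwe
      exact ⟨2 * a ^ 2 + 3 * a + 1, by ring⟩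
    have cop : Nat.Coprime (2 ^ d) (w ^ 2 + 3 * w + 3) :=
      Nat.Coprime.pow_left _ (Nat.coprime_two_left.mpr hBodd)
    have hdw : 2 ^ d ∣ w := cop.dvd_of_dvd_mul_right ⟨v, hmv.symm⟩
    have hle : 2 ^ d ≤ w := Nat.le_of_dvd (by omega) hdw
    have hm1 : 1 ≤ 2 ^ d := Nat.one_le_two_pow
    nlinarith [hmv, hle, hveq, hw2, hm1]
  -- q odd
  have hqodd : Odd q := hq.odd_of_ne_two hq2
  have hnodd : Odd (v + 1) := by rw [← hnv]; exact hqodd.pow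
  have hdvd2 : (v + 1) ∣ 2 * (w * (w ^ 2 + 3 * w + 3)) := ⟨v, hAB.symm⟩
  have hdvd' : (v + 1) ∣ w * (w ^ 2 + 3 * w + 3) :=
    (Nat.coprime_two_right.mpr hnodd).dvd_of_dvd_mul_left hdvd2
  by_cases hqw : q ∣ w
  · by_cases hqB : q ∣ w ^ 2 + 3 * w + 3
    · -- q = 3 case
      have h3 : q ∣ w ^ 2 + 3 * w + 3 - w * (w + 3) :=
        Nat.dvd_sub hqB (hqw.mul_right (w + 3))
      have e3 : w ^ 2 + 3 * w + 3 - w * (w + 3) = 3 := by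
        have e : w * (w + 3) = w ^ 2 + 3 * w := by ring
        rw [e]
        set s := w ^ 2
        omega
      rw [e3] at h3
      have hq3 : q = 3 := (Nat.prime_dvd_prime_iff_eq hq Nat.prime_three).mp h3
      subst hq3
      obtain ⟨a, rfl⟩ := hqw
      have ha1 : 1 ≤ a := by omega
      have hc3 : ¬ 3 ∣ 3 * a ^ 2 + 3 * a + 1 := by
        intro h
        have e : 3 * a ^ 2 + 3 * a + 1 = 3 * (a ^ 2 + a) + 1 := by ring
        rw [e] at h
        set t := a ^ 2 + a
        omega
      have e2 : 3 * a * ((3 * a) ^ 2 + 3 * (3 * a) + 3)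
          = (3 * (3 * a)) * (3 * a ^ 2 + 3 * a + 1) := by ring
      rw [← hnv] at hdvd'
      rw [e2] at hdvd'
      have cop3 : Nat.Coprime (3 ^ b) (3 * a ^ 2 + 3 * a + 1) :=
        Nat.Coprime.pow_left _ ((Nat.prime_three.coprime_iff_not_dvd).mpr hc3)
      have hd2 : 3 ^ b ∣ 3 * (3 * a) := cop3.dvd_of_dvd_mul_right hdvd'
      obtain ⟨d, rfl⟩ : ∃ d, b = d + 1 := ⟨b - 1, by omega⟩
      have hd3 : 3 ^ d ∣ 3 * a := by
        have e4 : (3:ℕ) ^ (d + 1) = 3 * 3 ^ d := by ring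
        rw [e4] at hd2
        exact (Nat.mul_dvd_mul_iff_left (by norm_num : 0 < 3)).mp hd2
      have hle : 3 ^ d ≤ 3 * a := Nat.le_of_dvd (by omega) hd3
      have hvle : v + 1 ≤ 9 * a := by
        have hvv : v + 1 = 3 * 3 ^ d := by rw [← hnv]; ring
        have h9 := Nat.mul_le_mul_left 3 hle
        linarith
      have h1 : (v + 1) * v ≤ (9 * a) * (9 * a) := Nat.mul_le_mul hvle (by omega)
      nlinarith [hAB, h1, ha1]
    · -- n ∣ w
      have cop : Nat.Coprime (v + 1) (w ^ 2 + 3 * w + 3) := by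
        rw [← hnv]
        exact Nat.Coprime.pow_left _ ((hq.coprime_iff_not_dvd).mpr hqB)
      have hd : (v + 1) ∣ w := cop.dvd_of_dvd_mul_right hdvd'
      have hle : v + 1 ≤ w := Nat.le_of_dvd (by omega) hd
      have h1 : (v + 1) * v ≤ w * w := Nat.mul_le_mul hle (by omega)
      nlinarith [hAB, h1, hw2]
  · -- n ∣ w^2+3w+3
    have cop : Nat.Coprime (v + 1) w := by
      rw [← hnv]
      exact Nat.Coprime.pow_left _ ((hq.coprime_iff_not_dvd).mpr hqw)
    obtain ⟨k, hk⟩ := cop.dvd_of_dvd_mul_left hdvd'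
    have hk1 : 1 ≤ k := by
      rcases Nat.eq_zero_or_pos k with h0 | h0
      · subst h0
        simp at hk
      · exact h0
    have hveq : v = 2 * (w * k) := by
      refine Nat.eq_of_mul_eq_mul_left (show 0 < v + 1 by omega) ?_
      rw [hAB, hk]; ring
    subst hveq
    rw [hk] at hAB
    have hkw : w ^ 2 + 3 * w + 3 = (2 * (w * k) + 1) * k := hk
    rcases le_or_gt k 3 with hk3 | hk4
    · interval_cases k
      · nlinarith [hkw, hw2]
      · obtain ⟨a, rfl⟩ := hwe
        have hk' : 4 * a ^ 2 + 6 * a + 3 = 16 * a + 2 := by linarith [hkw]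
        set s := a ^ 2
        omega
      · have h' : w * w = 15 * w := by nlinarith [hkw]
        have : w = 15 := Nat.eq_of_mul_eq_mul_right (by omega) h'
        omega
    · -- k ≥ 4 : square squeeze over ℤ
      have hkZ : ((w:ℤ) ^ 2 + 3 * w + 3) = (2 * ((w:ℤ) * k) + 1) * k := by
        exact_mod_cast hkw
      have hK4 : (4:ℤ) ≤ (k:ℤ) := by exact_mod_cast hk4
      obtain ⟨t, ht⟩ : ∃ t : ℤ, t ^ 2 = 4 * (k:ℤ) ^ 4 - 12 * (k:ℤ) ^ 2 + 4 * (k:ℤ) - 3 :=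
        ⟨2 * (w:ℤ) + 3 - 2 * (k:ℤ) ^ 2, by linear_combination 4 * hkZ⟩
      have h1 : (2 * (k:ℤ) ^ 2 - 3) ^ 2 < t ^ 2 := by nlinarith [hK4, ht]
      have h2 : t ^ 2 < (2 * (k:ℤ) ^ 2 - 2) ^ 2 := by nlinarith [hK4, ht]
      have h0 : (0:ℤ) ≤ 2 * (k:ℤ) ^ 2 - 3 := by nlinarith [hK4]
      have habs : 2 * (k:ℤ) ^ 2 - 3 < |t| := by
        nlinarith [sq_abs t, abs_nonneg t, h1, h0]
      have hge : 2 * (k:ℤ) ^ 2 - 2 ≤ |t| := by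
        have := Int.add_one_le_iff.mpr habs
        linarith
      have h3 : (2 * (k:ℤ) ^ 2 - 2) ^ 2 ≤ t ^ 2 := by
        nlinarith [hge, abs_nonneg t, sq_abs t]
      linarith [h2, h3]
end

section
/- The only solutions in primes p, q and positive integers a, b to the equation p^a - 1 = C(q^b, 3) are (p,q,a,b) = (5,2,1,2), (2,3,1,1), and (11,5,1,1). -/
lemma choose2' (k : ℕ) : 2 * ((k+2).choose 2) = (k+1) * (k+2) := by
  induction k with
  | zero => decide
  | succ j ihj =>
    rw [show j+1+2 = (j+2)+1 from rfl, Nat.choose_succ_succ]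
    simp only [Nat.choose_one_right, Nat.mul_add]
    rw [ihj]; ring

lemma choose3' (m : ℕ) : 6 * ((m+2).choose 3) = m * (m+1) * (m+2) := by
  induction m with
  | zero => decide
  | succ k ih =>
    rw [show k+1+2 = (k+2)+1 from rfl, Nat.choose_succ_succ]
    simp only [Nat.mul_add]
    rw [ih, show (6:ℕ) = 3*2 by rfl, mul_assoc, choose2']; ring

lemma pp_eq' (p a r : ℕ) (hp : p.Prime) (hr : r.Prime) (ha : 0 < a) (h : p ^ a = r) :
    p = r ∧ a = 1 := by
  have hpr : p ∣ r := h ▸ dvd_pow_self p ha.ne'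
  have hpe := (Nat.prime_dvd_prime_iff_eq hp hr).mp hpr
  subst hpe
  exact ⟨rfl, Nat.pow_right_injective hp.two_le (h.trans (pow_one p).symm)⟩

lemma pow_eq_four' (q b : ℕ) (hq : q.Prime) (hb : 0 < b) (h : q ^ b = 4) : q = 2 ∧ b = 2 := by
  have hq4 : q ∣ 4 := h ▸ dvd_pow_self q hb.ne'
  have hq2 : q ∣ 2 := hq.dvd_of_dvd_pow (n := 2) (by norm_num at hq4 ⊢; exact hq4)
  have hqe := (Nat.prime_dvd_prime_iff_eq hq Nat.prime_two).mp hq2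
  subst hqe
  exact ⟨rfl, Nat.pow_right_injective (le_refl 2) (h.trans (by norm_num))⟩

lemma not_pow_val' (q b N : ℕ) (h2 : 2 ≤ q) (hb : 0 < b) (h : q ^ b = N) :
    q ≤ N ∧ b < N := by
  constructor
  · calc q ≤ q ^ b := Nat.le_self_pow hb.ne' q
      _ = N := h
  · calc b < 2 ^ b := Nat.lt_two_pow_self (n := b)
      _ ≤ q ^ b := Nat.pow_le_pow_left h2 b
      _ = N := h

lemma no10' (q b : ℕ) (hq : q.Prime) (hb : 0 < b) : q ^ b ≠ 10 := by
  intro h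
  obtain ⟨hql, hbl⟩ := not_pow_val' q b 10 hq.two_le hb h
  have h2 := hq.two_le
  interval_cases q <;> interval_cases b <;> (revert hq h; decide)

lemma no21' (q b : ℕ) (hq : q.Prime) (hb : 0 < b) : q ^ b ≠ 21 := by
  intro h
  obtain ⟨hql, hbl⟩ := not_pow_val' q b 21 hq.two_le hb h
  have h2 := hq.two_le
  interval_cases q <;> interval_cases b <;> (revert hq h; decide)

lemma pow_eleven_cases' (x : ℕ) (hx : 11 ^ x ≤ 4000) :
    11 ^ x = 1 ∨ 11 ^ x = 11 ∨ 11 ^ x = 121 ∨ 11 ^ x = 1331 := by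
  have hx3 : x ≤ 3 := by
    by_contra hc
    push_neg at hc
    have h4 : (11:ℕ) ^ 4 ≤ 11 ^ x := Nat.pow_le_pow_right (by norm_num) hc
    norm_num at h4
    omega
  interval_cases x <;> norm_num

theorem stmt_5 (p q a b : ℕ) (hp : p.Prime) (hq : q.Prime) (ha : 0 < a) (hb : 0 < b) :
    p ^ a = (q ^ b).choose 3 + 1 ↔
      (p, q, a, b) = (5, 2, 1, 2) ∨ (p, q, a, b) = (2, 3, 1, 1) ∨
      (p, q, a, b) = (11, 5, 1, 1) := by
  constructor
  · intro h
    have hn2 : 2 ≤ q ^ b :=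
      calc 2 ≤ q := hq.two_le
        _ ≤ q ^ b := Nat.le_self_pow hb.ne' q
    obtain ⟨m, hm⟩ : ∃ m, q ^ b = m + 2 := ⟨q ^ b - 2, by omega⟩
    rw [hm] at h
    have E : 6 * p ^ a = (m + 3) * (m ^ 2 + 2) := by
      calc 6 * p ^ a = 6 * ((m+2).choose 3) + 6 := by rw [h]; ring
        _ = m * (m+1) * (m+2) + 6 := by rw [choose3']
        _ = (m+3) * (m^2+2) := by ring
    have hpa2 : 2 ≤ p ^ a := le_trans hp.two_le (Nat.le_self_pow ha.ne' p)
    rcases Nat.lt_or_ge m 4 with hm4 | hm4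
    · interval_cases m
      · exfalso; norm_num at E; rcases E with E | E; exact hp.ne_one E; omega
      · norm_num at E
        have hpa : p ^ a = 2 := by linarith
        obtain ⟨rfl, rfl⟩ := pp_eq' p a 2 hp (by norm_num) ha hpa
        obtain ⟨rfl, rfl⟩ := pp_eq' q b 3 hq (by norm_num) hb hm
        right; left; rfl
      · norm_num at E
        have hpa : p ^ a = 5 := by linarith
        obtain ⟨rfl, rfl⟩ := pp_eq' p a 5 hp (by norm_num) ha hpa
        obtain ⟨rfl, rfl⟩ := pow_eq_four' q b hq hb hm
        left; rfl
      · norm_num at E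
        have hpa : p ^ a = 11 := by linarith
        obtain ⟨rfl, rfl⟩ := pp_eq' p a 11 hp (by norm_num) ha hpa
        obtain ⟨rfl, rfl⟩ := pp_eq' q b 5 hq (by norm_num) hb hm
        right; right; rfl
    · exfalso
      by_cases hd1 : p ∣ (m + 3)
      · by_cases hd2 : p ∣ (m ^ 2 + 2)
        · -- p divides both factors, so p = 11
          obtain ⟨k, rfl⟩ : ∃ k, m = k + 4 := ⟨m - 4, by omega⟩
          have hd1' : p ∣ (k + 7) := by rwa [show k+4+3 = k+7 by omega] at hd1
          have hA : p ∣ (k+7) * (k+1) := hd1'.mul_right (k+1)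
          have hident : (k+4) ^ 2 + 2 = (k+7) * (k+1) + 11 := by ring
          rw [hident] at hd2
          have h11 : p ∣ 11 := (Nat.dvd_add_right hA).mp hd2
          have hp11 : p = 11 := (Nat.prime_dvd_prime_iff_eq hp (by norm_num)).mp h11
          subst hp11
          obtain ⟨a', rfl⟩ : ∃ a', a = a' + 1 := ⟨a - 1, by omega⟩
          obtain ⟨w, hw⟩ := hd1'
          have hw1 : 1 ≤ w := by omega
          have hE2 : 11 * (w * ((k+4) ^ 2 + 2)) = 11 * (6 * 11 ^ a') := by
            calc 11 * (w * ((k+4) ^ 2 + 2)) = (k+4+3) * ((k+4) ^ 2 + 2) := by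
                  rw [show k+4+3 = k+7 by omega, hw]; ring
              _ = 6 * 11 ^ (a'+1) := E.symm
              _ = 11 * (6 * 11 ^ a') := by ring
          have E' : w * ((k+4) ^ 2 + 2) = 6 * 11 ^ a' :=
            Nat.eq_of_mul_eq_mul_left (by norm_num) hE2
          by_cases hw11 : (11:ℕ) ∣ w
          · obtain ⟨v, rfl⟩ := hw11
            have hv1 : 1 ≤ v := by omega
            obtain ⟨t, rfl⟩ : ∃ t, v = t + 1 := ⟨v - 1, by omega⟩
            have hk : k = 121 * t + 114 := by omega
            subst hk
            obtain ⟨u, X, hu1, hu2, hu3⟩ :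
                ∃ u X, (121*t+114+4) ^ 2 + 2 = 11 * u ∧ u = 11 * X + 1 ∧ 1266 ≤ u :=
              ⟨1331*t^2 + 2596*t + 1266, 121*t^2 + 236*t + 115, by ring, by ring,
                by nlinarith [sq_nonneg t]⟩
            have hu11 : ¬ (11:ℕ) ∣ u := by omega
            have hu6 : u ∣ 6 * 11 ^ a' := ⟨121 * (t+1), by rw [← E', hu1]; ring⟩
            have hcopu : u.Coprime (11 ^ a') :=
              Nat.Coprime.pow_right a'
                (((Nat.Prime.coprime_iff_not_dvd (by norm_num)).mpr hu11).symm)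
            have hu6' : u ∣ 6 := hcopu.dvd_of_dvd_mul_right hu6
            have := Nat.le_of_dvd (by norm_num) hu6'
            omega
          · have hwdvd : w ∣ 6 * 11 ^ a' := ⟨(k+4) ^ 2 + 2, E'.symm⟩
            have hcopw : w.Coprime (11 ^ a') :=
              Nat.Coprime.pow_right a'
                (((Nat.Prime.coprime_iff_not_dvd (by norm_num)).mpr hw11).symm)
            have hw6 : w ∣ 6 := hcopw.dvd_of_dvd_mul_right hwdvd
            have hwle : w ≤ 6 := Nat.le_of_dvd (by norm_num) hw6
            interval_cases w
            · exact absurd (hm.trans (by omega)) (no10' q b hq hb)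
            · exact absurd (hm.trans (by omega)) (no21' q b hq hb)
            · have hk : k = 26 := by omega
              subst hk
              norm_num at E'
              rcases pow_eleven_cases' a' (by linarith) with h'|h'|h'|h' <;> linarith
            · exact absurd hw6 (by norm_num)
            · exact absurd hw6 (by norm_num)
            · have hk : k = 59 := by omega
              subst hk
              norm_num at E'
              rcases pow_eleven_cases' a' (by linarith) with h'|h'|h'|h' <;> linarith
        · have hco : (m ^ 2 + 2).Coprime (p ^ a) :=
            Nat.Coprime.pow_right a (((Nat.Prime.coprime_iff_not_dvd hp).mpr hd2).symm)
          have hdvd : (m ^ 2 + 2) ∣ 6 * p ^ a := ⟨m + 3, by rw [E]; ring⟩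
          have h6 : (m ^ 2 + 2) ∣ 6 := hco.dvd_of_dvd_mul_right hdvd
          have := Nat.le_of_dvd (by norm_num) h6
          nlinarith
      · have hco : (m + 3).Coprime (p ^ a) :=
          Nat.Coprime.pow_right a (((Nat.Prime.coprime_iff_not_dvd hp).mpr hd1).symm)
        have hdvd : (m + 3) ∣ 6 * p ^ a := ⟨m ^ 2 + 2, E⟩
        have h6 : (m + 3) ∣ 6 := hco.dvd_of_dvd_mul_right hdvd
        have := Nat.le_of_dvd (by norm_num) h6
        omega
  · rintro (h | h | h) <;>
      (simp only [Prod.mk.injEq] at h; obtain ⟨rfl, rfl, rfl, rfl⟩ := h) <;> decide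
end

section
/- There are no primes p, q and positive integers a, b with C(p^a, 3) - C(q^b, 2) = 2. -/
/-- `choose n 2 * 2 = n * (n-1)` for naturals. -/
lemma choose_two_mul (N : ℕ) : N.choose 2 * 2 = N * (N - 1) := by
  induction N with
  | zero => rfl
  | succ k ih =>
    rw [Nat.choose_succ_succ, Nat.choose_one_right, Nat.add_mul, ih]
    cases k with
    | zero => rfl
    | succ j => simp [Nat.succ_sub_one]; ring

/-- `choose n 3 * 6 = n * (n-1) * (n-2)` for naturals. -/
lemma choose_three_mul (N : ℕ) : N.choose 3 * 6 = N * (N - 1) * (N - 2) := by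
  induction N with
  | zero => rfl
  | succ k ih =>
    rw [Nat.choose_succ_succ, Nat.add_mul, ih]
    have h2 : k.choose 2 * 6 = (k.choose 2 * 2) * 3 := by ring
    rw [h2, choose_two_mul]
    match k with
    | 0 => rfl
    | 1 => rfl
    | (j+2) => simp [Nat.succ_sub_one]; ring

/-- If an odd number has all prime factors ≡ 1 mod 4, then it is ≡ 1 mod 4. -/
lemma mod4_one : ∀ N : ℕ, N % 2 = 1 →
    (∀ r : ℕ, r.Prime → r ∣ N → r % 4 = 1) → N % 4 = 1 := by
  intro N
  induction N using Nat.strong_induction_on with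
  | _ N ih =>
    intro hodd hall
    rcases Nat.lt_or_ge N 2 with hN | hN
    · interval_cases N <;> omega
    · have hne1 : N ≠ 1 := by omega
      have hrp : N.minFac.Prime := Nat.minFac_prime hne1
      obtain ⟨t, ht⟩ := N.minFac_dvd
      have hr4 : N.minFac % 4 = 1 := hall _ hrp N.minFac_dvd
      have htdvd : t ∣ N := Dvd.intro_left _ ht.symm
      have htodd : t % 2 = 1 := by
        rcases Nat.even_or_odd t with he | ho
        · exfalso
          have h2 : 2 ∣ N := dvd_trans he.two_dvd htdvd
          omega
        · exact Nat.odd_iff.mp ho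
      have hr2 : 2 ≤ N.minFac := hrp.two_le
      have ht0 : 0 < t := by
        rcases Nat.eq_zero_or_pos t with h0 | h0
        · subst h0; simp at ht; omega
        · exact h0
      have htlt : t < N := by
        calc t < 2 * t := by omega
        _ ≤ N.minFac * t := Nat.mul_le_mul hr2 le_rfl
        _ = N := ht.symm
      have ht4 : t % 4 = 1 := ih t htlt htodd (fun s hs hst => hall s hs (hst.trans htdvd))
      rw [ht, Nat.mul_mod, hr4, ht4]

theorem stmt_12 : ¬ ∃ (p q a b : ℕ), p.Prime ∧ q.Prime ∧ 0 < a ∧ 0 < b ∧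
    (p ^ a).choose 3 = (q ^ b).choose 2 + 2 := by
  rintro ⟨p, q, a, b, hp, hq, ha, hb, heq⟩
  set n : ℕ := p ^ a with hn
  set m : ℕ := q ^ b with hm
  have hn2 : 2 ≤ n := Nat.one_lt_pow (by omega) hp.one_lt
  have hm2 : 2 ≤ m := Nat.one_lt_pow (by omega) hq.one_lt
  -- the basic equation over ℕ
  have hNat : n * (n - 1) * (n - 2) = m * (m - 1) * 3 + 12 := by
    have h6 := congrArg (· * 6) heq
    rw [choose_three_mul] at h6
    rw [show (m.choose 2 + 2) * 6 = m.choose 2 * 2 * 3 + 12 by ring, choose_two_mul] at h6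
    exact h6
  -- n ≥ 4
  have hn4 : 4 ≤ n := by
    by_contra hlt
    push_neg at hlt
    interval_cases n <;> omega
  -- equation over ℤ
  have Ez : (n : ℤ) * ((n : ℤ) - 1) * ((n : ℤ) - 2)
      = 3 * ((m : ℤ) * ((m : ℤ) - 1)) + 12 := by
    have h1 : (1 : ℕ) ≤ n := by omega
    have h2 : (2 : ℕ) ≤ n := by omega
    have h3 : (1 : ℕ) ≤ m := by omega
    zify [h1, h2, h3] at hNat
    linarith [hNat]
  -- key divisibility : (4n - 9) ∣ (96m - 48)^2 + 180^2
  set N : ℕ := 4 * n - 9 with hNdef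
  have hNZ : (N : ℤ) = 4 * (n : ℤ) - 9 := by omega
  have hN4 : N % 4 = 3 := by omega
  have hdvdZ : (N : ℤ) ∣ (96 * (m : ℤ) - 48) ^ 2 + 32400 := by
    refine ⟨768 * (n : ℤ) ^ 2 - 576 * (n : ℤ) + 240, ?_⟩
    rw [hNZ]
    linear_combination (-3072 : ℤ) * Ez
  -- every prime factor of N is 3 or ≡ 1 mod 4
  have hprime : ∀ r : ℕ, r.Prime → r ∣ N → r = 3 ∨ r % 4 = 1 := by
    intro r hr hrN
    by_cases hr3 : r = 3
    · exact Or.inl hr3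
    right
    have hrodd : r ≠ 2 := by
      rintro rfl
      obtain ⟨c, hc⟩ := hrN
      omega
    haveI : Fact r.Prime := ⟨hr⟩
    have hdvdr : (r : ℤ) ∣ (96 * (m : ℤ) - 48) ^ 2 + 32400 :=
      dvd_trans (Int.natCast_dvd_natCast.mpr hrN) hdvdZ
    have h0 : (96 * ((m : ℕ) : ZMod r) - 48) ^ 2 + 32400 = 0 := by
      have := (ZMod.intCast_zmod_eq_zero_iff_dvd _ r).mpr hdvdr
      push_cast at this
      linear_combination this
    set z : ZMod r := 96 * ((m : ℕ) : ZMod r) - 48 with hz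
    by_cases h180 : (180 : ZMod r) = 0
    · -- r ∣ 180, r ≠ 2, 3 ⇒ r = 5
      have hr180 : r ∣ 180 := by
        have := (ZMod.natCast_eq_zero_iff 180 r).mp (by exact_mod_cast h180)
        exact this
      have h180' : r ∣ 2 ^ 2 * (3 ^ 2 * 5) := by
        have : (180 : ℕ) = 2 ^ 2 * (3 ^ 2 * 5) := by norm_num
        rwa [this] at hr180
      rcases (Nat.Prime.dvd_mul hr).mp h180' with h | h
      · exact absurd ((Nat.prime_dvd_prime_iff_eq hr Nat.prime_two).mp
          (hr.dvd_of_dvd_pow h)) hrodd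
      rcases (Nat.Prime.dvd_mul hr).mp h with h' | h'
      · exact absurd ((Nat.prime_dvd_prime_iff_eq hr Nat.prime_three).mp
          (hr.dvd_of_dvd_pow h')) hr3
      · have : r = 5 := (Nat.prime_dvd_prime_iff_eq hr (by norm_num)).mp h'
        omega
    · -- -1 is a square mod r, so r ≡ 1 mod 4
      have hsq : IsSquare (-1 : ZMod r) := by
        refine ⟨z * (180)⁻¹, ?_⟩
        field_simp
        linear_combination -h0
      have hmod : r % 4 ≠ 3 := ZMod.exists_sq_eq_neg_one_iff.mp hsq
      rcases hr.eq_two_or_odd' with rfl | hodd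
      · exact absurd rfl hrodd
      · have := Nat.odd_iff.mp hodd
        omega
  -- hence 3 ∣ N, so 3 ∣ n, so p = 3
  have h3N : 3 ∣ N := by
    by_contra h3
    have : N % 4 = 1 := by
      refine mod4_one N (by omega) ?_
      intro r hr hrN
      rcases hprime r hr hrN with rfl | h1
      · exact absurd hrN h3
      · exact h1
    omega
  have h3n : 3 ∣ n := by omega
  have hp3 : p = 3 := by
    have h3p : (3 : ℕ) ∣ p := Nat.Prime.dvd_of_dvd_pow Nat.prime_three h3n
    exact ((Nat.prime_dvd_prime_iff_eq Nat.prime_three hp).mp h3p).symm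
  subst hp3
  -- a ≤ 2, since otherwise 27 ∣ n forces y(y-1)+4 ≡ 0 mod 9, impossible
  have ha2 : a ≤ 2 := by
    by_contra hgt
    push_neg at hgt
    have h27 : (27 : ℕ) ∣ n := by
      rw [hn]
      have := pow_dvd_pow 3 (show 3 ≤ a by omega)
      simpa using this
    have h27Z : (27 : ℤ) ∣ (n : ℤ) := by exact_mod_cast Int.natCast_dvd_natCast.mpr h27
    obtain ⟨c, hc⟩ := h27Z
    have h9 : (9 : ℤ) ∣ ((m : ℤ) * ((m : ℤ) - 1) + 4) := by
      have hd : (27 : ℤ) ∣ 3 * ((m : ℤ) * ((m : ℤ) - 1) + 4) := by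
        refine ⟨c * ((n : ℤ) - 1) * ((n : ℤ) - 2), ?_⟩
        have : 3 * ((m : ℤ) * ((m : ℤ) - 1) + 4)
            = (n : ℤ) * ((n : ℤ) - 1) * ((n : ℤ) - 2) := by linarith [Ez]
        rw [this, hc]; ring
      obtain ⟨d, hd'⟩ := hd
      exact ⟨d, by linarith⟩
    have h90 : (((m : ℤ) * ((m : ℤ) - 1) + 4 : ℤ) : ZMod 9) = 0 :=
      (ZMod.intCast_zmod_eq_zero_iff_dvd _ 9).mpr h9
    push_cast at h90
    have hall : ∀ w : ZMod 9, w * (w - 1) + 4 ≠ 0 := by decide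
    exact hall _ h90
  -- so n = 3 or n = 9; n ≥ 4 rules out 3, and n = 9 gives m(m-1) = 164, impossible
  interval_cases a
  · simp [hn] at hn4
  · -- a = 2, n = 9
    have hn9 : n = 9 := by rw [hn]; norm_num
    rw [hn9] at hNat
    have h164 : m * (m - 1) = 164 := by omega
    rcases le_or_gt m 13 with hle | hgt
    · have : m * (m - 1) ≤ 13 * 12 := Nat.mul_le_mul hle (by omega)
      omega
    · have : 14 * 13 ≤ m * (m - 1) := Nat.mul_le_mul (by omega) (by omega)
      omega
end

section
/- The only solution in primes p, q and positive integers a, b to the equation C(p^a, 2) - C(q^b, 4) = 2 is (p,q,a,b) = (3,2,1,2). -/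
private def s13 : ℕ → ℤ × ℤ
  | 0 => (5, 5)
  | k+1 => (2 * (s13 k).1 + (s13 k).2, 3 * (s13 k).1 + 2 * (s13 k).2)

private lemma s13_ge : ∀ k, 5 ≤ (s13 k).1 ∧ 5 ≤ (s13 k).2 := by
  intro k
  induction k with
  | zero => simp [s13]
  | succ k ih => simp only [s13]; constructor <;> linarith [ih.1, ih.2]

private lemma s13_succ_ge (k : ℕ) : 15 ≤ (s13 (k+1)).1 := by
  have := s13_ge k
  simp only [s13]; linarith [this.1, this.2]

private lemma pell_classify : ∀ c : ℕ, ∀ X T : ℤ, X.toNat ≤ c → 0 < X → 0 < T →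
    3 * X ^ 2 = T ^ 2 + 50 → ∃ k, X = (s13 k).1 ∧ T = (s13 k).2 := by
  intro c
  induction c with
  | zero => intro X T h hX _ _; omega
  | succ c ih =>
    intro X T hc hX hT heq
    by_cases hX8 : X ≤ 8
    · have hX5 : X = 5 := by
        have hT10 : T ≤ 14 := by nlinarith
        interval_cases X <;> interval_cases T <;> omega
      subst hX5
      have : T = 5 := by nlinarith
      exact ⟨0, by simp [s13, this]⟩
    · push_neg at hX8
      have hX9 : 9 ≤ X := by omega
      have h1 : T < 2 * X := by nlinarith
      have h2 : 3 * X < 2 * T := by nlinarith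
      have h3 : X < T := by nlinarith
      obtain ⟨k, hk1, hk2⟩ := ih (2 * X - T) (2 * T - 3 * X) (by omega) (by omega) (by omega)
        (by linear_combination heq)
      exact ⟨k + 1, by simp only [s13, ← hk1, ← hk2]; constructor <;> ring⟩
private lemma s13_18 : s13 18 = (77790042455, 134736305855) := by
  norm_num [s13]

private lemma s13_mod (M : ℕ)
    (h1 : (((s13 18).1 : ZMod M)) = ((s13 0).1 : ZMod M))
    (h2 : (((s13 18).2 : ZMod M)) = ((s13 0).2 : ZMod M)) :
    ∀ d r, (((s13 (18 * d + r)).1 : ZMod M)) = ((s13 r).1 : ZMod M) ∧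
      (((s13 (18 * d + r)).2 : ZMod M)) = ((s13 r).2 : ZMod M) := by
  have step : ∀ k, (((s13 (k + 18)).1 : ZMod M)) = ((s13 k).1 : ZMod M) ∧
      (((s13 (k + 18)).2 : ZMod M)) = ((s13 k).2 : ZMod M) := by
    intro k
    induction k with
    | zero => exact ⟨h1, h2⟩
    | succ k ih =>
      have e : k + 1 + 18 = (k + 18) + 1 := by omega
      have hs : ∀ j : ℕ, s13 (j + 1) = (2 * (s13 j).1 + (s13 j).2, 3 * (s13 j).1 + 2 * (s13 j).2) :=
        fun j => rfl
      rw [e, hs (k + 18), hs k]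
      constructor
      · show ((2 * (s13 (k+18)).1 + (s13 (k+18)).2 : ℤ) : ZMod M) = ((2 * (s13 k).1 + (s13 k).2 : ℤ) : ZMod M)
        push_cast
        rw [ih.1, ih.2]
      · show ((3 * (s13 (k+18)).1 + 2 * (s13 (k+18)).2 : ℤ) : ZMod M) = ((3 * (s13 k).1 + 2 * (s13 k).2 : ℤ) : ZMod M)
        push_cast
        rw [ih.1, ih.2]
  intro d
  induction d with
  | zero => intro r; simp
  | succ d ihd =>
    intro r
    have e : 18 * (d + 1) + r = (18 * d + r) + 18 := by ring
    rw [e]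
    exact ⟨(step _).1.trans (ihd r).1, (step _).2.trans (ihd r).2⟩
private lemma s13v0 : s13 0 = (5, 5) := by norm_num [s13]
private lemma s13v1 : s13 1 = (15, 25) := by norm_num [s13]
private lemma s13v2 : s13 2 = (55, 95) := by norm_num [s13]
private lemma s13v3 : s13 3 = (205, 355) := by norm_num [s13]
private lemma s13v4 : s13 4 = (765, 1325) := by norm_num [s13]
private lemma s13v5 : s13 5 = (2855, 4945) := by norm_num [s13]
private lemma s13v6 : s13 6 = (10655, 18455) := by norm_num [s13]
private lemma s13v7 : s13 7 = (39765, 68875) := by norm_num [s13]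
private lemma s13v8 : s13 8 = (148405, 257045) := by norm_num [s13]
private lemma s13v9 : s13 9 = (553855, 959305) := by norm_num [s13]
private lemma s13v10 : s13 10 = (2067015, 3580175) := by norm_num [s13]
private lemma s13v11 : s13 11 = (7714205, 13361395) := by norm_num [s13]
private lemma s13v12 : s13 12 = (28789805, 49865405) := by norm_num [s13]
private lemma s13v13 : s13 13 = (107445015, 186100225) := by norm_num [s13]
private lemma s13v14 : s13 14 = (400990255, 694535495) := by norm_num [s13]
private lemma s13v15 : s13 15 = (1496516005, 2592041755) := by norm_num [s13]
private lemma s13v16 : s13 16 = (5585073765, 9673631525) := by norm_num [s13]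
private lemma s13v17 : s13 17 = (20843779055, 36102484345) := by norm_num [s13]

private lemma castEq (M : ℕ) (A B : ℤ) (h : (M : ℤ) ∣ (A - B)) : ((A : ZMod M)) = ((B : ZMod M)) := by
  have h0 : ((A - B : ℤ) : ZMod M) = 0 := by
    rw [ZMod.intCast_zmod_eq_zero_iff_dvd]; exact_mod_cast h
  rw [Int.cast_sub, sub_eq_zero] at h0
  exact h0

private lemma killA (M : ℕ) [NeZero M] (T N : ℤ) (hTN : T = N ^ 2 - 3 * N + 1)
    (c : ZMod M) (hT : ((T : ZMod M)) = c) (hnsq : ∀ z : ZMod M, z ^ 2 ≠ 4 * c + 5) : False := by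
  apply hnsq ((2 * N - 3 : ℤ) : ZMod M)
  have h1 : (2 * N - 3) ^ 2 = 4 * T + 5 := by rw [hTN]; ring
  calc (((2 * N - 3 : ℤ)) : ZMod M) ^ 2 = ((4 * T + 5 : ℤ) : ZMod M) := by
        rw [← h1]; push_cast; ring
    _ = 4 * c + 5 := by push_cast; rw [hT]

theorem stmt_13 (p q a b : ℕ) (hp : p.Prime) (hq : q.Prime) (ha : 0 < a) (hb : 0 < b) :
    (p ^ a).choose 2 = (q ^ b).choose 4 + 2 ↔ (p, q, a, b) = (3, 2, 1, 2) := by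
  constructor
  · intro h
    have hm2 : 2 ≤ p ^ a := Nat.one_lt_pow (by omega) hp.one_lt
    have hn2 : 2 ≤ q ^ b := Nat.one_lt_pow (by omega) hq.one_lt
    by_cases hn4 : q ^ b < 4
    · exfalso
      rw [Nat.choose_eq_zero_of_lt hn4] at h
      have h3 : ¬ (3 ≤ p ^ a) := by
        intro h3
        have := Nat.choose_le_choose 2 h3
        simp [Nat.choose] at this
        omega
      have hm : p ^ a = 2 := by omega
      rw [hm] at h
      simp [Nat.choose] at h
    · push_neg at hn4
      set m := p ^ a with hm
      set n := q ^ b with hn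
      have d2 : m.descFactorial 2 = 2 * m.choose 2 := by
        rw [Nat.descFactorial_eq_factorial_mul_choose]; rfl
      have d4 : n.descFactorial 4 = 24 * n.choose 4 := by
        rw [Nat.descFactorial_eq_factorial_mul_choose]; rfl
      have e2 : m.descFactorial 2 = (m - 1) * (m * 1) := by simp [Nat.descFactorial]
      have e4 : n.descFactorial 4 = (n - 3) * ((n - 2) * ((n - 1) * (n * 1))) := by
        simp [Nat.descFactorial]
      have key : 12 * ((m - 1) * (m * 1)) = (n - 3) * ((n - 2) * ((n - 1) * (n * 1))) + 48 := by
        rw [← e2, ← e4, d2, d4, h]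
        ring
      have hz : 12 * (((m:ℤ) - 1) * ((m:ℤ) * 1))
          = ((n:ℤ) - 3) * (((n:ℤ) - 2) * (((n:ℤ) - 1) * ((n:ℤ) * 1))) + 48 := by
        zify [show 1 ≤ m by omega, show 1 ≤ n by omega, show 2 ≤ n by omega,
          show 3 ≤ n by omega] at key
        linarith
      have hXpos : (0:ℤ) < 2 * (m:ℤ) - 1 := by
        have : (2:ℤ) ≤ (m:ℕ) := by exact_mod_cast hm2
        linarith
      have hN4 : (4:ℤ) ≤ (n:ℤ) := by exact_mod_cast hn4
      have hTpos : (0:ℤ) < (n:ℤ)^2 - 3*(n:ℤ) + 1 := by nlinarith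
      have heq : 3 * (2*(m:ℤ) - 1)^2 = ((n:ℤ)^2 - 3*(n:ℤ) + 1)^2 + 50 := by
        linear_combination hz
      obtain ⟨k, hk1, hk2⟩ := pell_classify (2*(m:ℤ) - 1).toNat _ _ le_rfl hXpos hTpos heq
      have per9 := s13_mod 9 (castEq 9 _ _ (by rw [s13_18, s13v0]; norm_num))
        (castEq 9 _ _ (by rw [s13_18, s13v0]; norm_num))
      have per17 := s13_mod 17 (castEq 17 _ _ (by rw [s13_18, s13v0]; norm_num))
        (castEq 17 _ _ (by rw [s13_18, s13v0]; norm_num))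
      have per25 := s13_mod 25 (castEq 25 _ _ (by rw [s13_18, s13v0]; norm_num))
        (castEq 25 _ _ (by rw [s13_18, s13v0]; norm_num))
      obtain ⟨d, r, hrlt, rfl⟩ : ∃ d r, r < 18 ∧ k = 18 * d + r :=
        ⟨k / 18, k % 18, Nat.mod_lt _ (by norm_num), (Nat.div_add_mod k 18).symm⟩
      interval_cases r
      · -- r = 0 : the solution (or contradiction for d ≥ 1)
        have hx9 : ((2*(m:ℤ) - 1 : ℤ) : ZMod 9) = ((5 : ℤ) : ZMod 9) := by
          rw [hk1, (per9 d 0).1, s13v0]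
        have hm9 : ((m : ℕ) : ZMod 9) = 3 := by
          have solv : ∀ z : ZMod 9, 2 * z - 1 = (5 : ZMod 9) → z = 3 := by decide
          push_cast at hx9
          exact solv _ hx9
        have h3m : (3 : ℕ) ∣ m := by
          have h30 : ((m : ℕ) : ZMod 3) = 0 := by
            have := congrArg (ZMod.castHom (by norm_num : (3:ℕ) ∣ 9) (ZMod 3)) hm9
            rw [map_natCast, map_ofNat] at this
            rw [this]; decide
          exact (ZMod.natCast_eq_zero_iff m 3).mp h30
        have hp3 : p = 3 := by
          have h3p : (3 : ℕ) ∣ p := Nat.Prime.dvd_of_dvd_pow Nat.prime_three (hm ▸ h3m)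
          exact ((Nat.prime_dvd_prime_iff_eq Nat.prime_three hp).mp h3p).symm
        have ha1 : a = 1 := by
          by_contra hne
          have h9m : (9 : ℕ) ∣ m := by
            rw [hm, hp3]
            calc (9:ℕ) = 3 ^ 2 := by norm_num
            _ ∣ 3 ^ a := pow_dvd_pow 3 (by omega)
          have h90 : ((m : ℕ) : ZMod 9) = 0 := (ZMod.natCast_eq_zero_iff m 9).mpr h9m
          rw [hm9] at h90
          exact absurd h90 (by decide)
        have hm3 : m = 3 := by rw [hm, hp3, ha1, pow_one]
        rcases Nat.eq_zero_or_pos d with hd | hd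
        · subst hd
          have h5 : ((n:ℤ))^2 - 3*(n:ℤ) + 1 = 5 := by rw [hk2]; rfl
          have hfac : ((n:ℤ) - 4) * ((n:ℤ) + 1) = 0 := by linear_combination h5
          have hn4' : n = 4 := by
            rcases mul_eq_zero.mp hfac with h' | h'
            · have : (n:ℤ) = 4 := by linarith
              exact_mod_cast this
            · exfalso; linarith
          have hq2 : q = 2 := by
            have hqd : q ∣ 2 ^ 2 := by
              rw [show (2:ℕ)^2 = 4 from rfl, ← hn4', hn]
              exact dvd_pow_self q (by omega)
            have := Nat.Prime.dvd_of_dvd_pow hq hqd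
            exact (Nat.prime_dvd_prime_iff_eq hq Nat.prime_two).mp this
          have hb2 : b = 2 := by
            have h4 : q ^ b = 2 ^ 2 := by rw [← hn, hn4']; rfl
            rw [hq2] at h4
            exact Nat.pow_right_injective (le_refl 2) h4
          rw [hp3, hq2, ha1, hb2]
        · exfalso
          have h15 : (15:ℤ) ≤ (s13 (18 * d + 0)).1 := by
            rw [show 18 * d + 0 = (18 * d - 1) + 1 by omega]
            exact s13_succ_ge _
          rw [← hk1, hm3] at h15
          norm_num at h15
      · -- r = 1: square test mod 9
        exact (killA 9 ((n:ℤ)^2 - 3*(n:ℤ) + 1) ((n:ℤ)) rfl (25 : ZMod 9)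
          (by rw [hk2, (per9 d 1).2, s13v1]; push_cast; ring) (by decide)).elim
      · -- r = 2: square test mod 17
        exact (killA 17 ((n:ℤ)^2 - 3*(n:ℤ) + 1) ((n:ℤ)) rfl (95 : ZMod 17)
          (by rw [hk2, (per17 d 2).2, s13v2]; push_cast; ring) (by decide)).elim
      · -- r = 3: square test mod 9
        exact (killA 9 ((n:ℤ)^2 - 3*(n:ℤ) + 1) ((n:ℤ)) rfl (355 : ZMod 9)
          (by rw [hk2, (per9 d 3).2, s13v3]; push_cast; ring) (by decide)).elim
      · -- r = 4: square test mod 25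
        exact (killA 25 ((n:ℤ)^2 - 3*(n:ℤ) + 1) ((n:ℤ)) rfl (1325 : ZMod 25)
          (by rw [hk2, (per25 d 4).2, s13v4]; push_cast; ring) (by decide)).elim
      · -- r = 5: square test mod 9
        exact (killA 9 ((n:ℤ)^2 - 3*(n:ℤ) + 1) ((n:ℤ)) rfl (4945 : ZMod 9)
          (by rw [hk2, (per9 d 5).2, s13v5]; push_cast; ring) (by decide)).elim
      · -- r = 6: square test mod 17
        exact (killA 17 ((n:ℤ)^2 - 3*(n:ℤ) + 1) ((n:ℤ)) rfl (18455 : ZMod 17)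
          (by rw [hk2, (per17 d 6).2, s13v6]; push_cast; ring) (by decide)).elim
      · -- r = 7: square test mod 9
        exact (killA 9 ((n:ℤ)^2 - 3*(n:ℤ) + 1) ((n:ℤ)) rfl (68875 : ZMod 9)
          (by rw [hk2, (per9 d 7).2, s13v7]; push_cast; ring) (by decide)).elim
      · -- r = 8: square test mod 25
        exact (killA 25 ((n:ℤ)^2 - 3*(n:ℤ) + 1) ((n:ℤ)) rfl (257045 : ZMod 25)
          (by rw [hk2, (per25 d 8).2, s13v8]; push_cast; ring) (by decide)).elim
      · -- r = 9: square test mod 9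
        exact (killA 9 ((n:ℤ)^2 - 3*(n:ℤ) + 1) ((n:ℤ)) rfl (959305 : ZMod 9)
          (by rw [hk2, (per9 d 9).2, s13v9]; push_cast; ring) (by decide)).elim
      · -- r = 10: square test mod 17
        exact (killA 17 ((n:ℤ)^2 - 3*(n:ℤ) + 1) ((n:ℤ)) rfl (3580175 : ZMod 17)
          (by rw [hk2, (per17 d 10).2, s13v10]; push_cast; ring) (by decide)).elim
      · -- r = 11: square test mod 9
        exact (killA 9 ((n:ℤ)^2 - 3*(n:ℤ) + 1) ((n:ℤ)) rfl (13361395 : ZMod 9)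
          (by rw [hk2, (per9 d 11).2, s13v11]; push_cast; ring) (by decide)).elim
      · -- r = 12 : B3 kill
        exfalso
        have hx9 : ((2*(m:ℤ) - 1 : ℤ) : ZMod 9) = ((28789805 : ℤ) : ZMod 9) := by
          rw [hk1, (per9 d 12).1, s13v12]
        have hm9 : ((m : ℕ) : ZMod 9) = 6 := by
          have solv : ∀ z : ZMod 9, 2 * z - 1 = (2 : ZMod 9) → z = 6 := by decide
          push_cast at hx9
          exact solv _ hx9
        have h3m : (3 : ℕ) ∣ m := by
          have h30 : ((m : ℕ) : ZMod 3) = 0 := by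
            have := congrArg (ZMod.castHom (by norm_num : (3:ℕ) ∣ 9) (ZMod 3)) hm9
            rw [map_natCast, map_ofNat] at this
            rw [this]; decide
          exact (ZMod.natCast_eq_zero_iff m 3).mp h30
        have hp3 : p = 3 := by
          have h3p : (3 : ℕ) ∣ p := Nat.Prime.dvd_of_dvd_pow Nat.prime_three (hm ▸ h3m)
          exact ((Nat.prime_dvd_prime_iff_eq Nat.prime_three hp).mp h3p).symm
        have ha1 : a = 1 := by
          by_contra hne
          have h9m : (9 : ℕ) ∣ m := by
            rw [hm, hp3]
            calc (9:ℕ) = 3 ^ 2 := by norm_num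
            _ ∣ 3 ^ a := pow_dvd_pow 3 (by omega)
          have h90 : ((m : ℕ) : ZMod 9) = 0 := (ZMod.natCast_eq_zero_iff m 9).mpr h9m
          rw [hm9] at h90
          exact absurd h90 (by decide)
        have hm3 : m = 3 := by rw [hm, hp3, ha1, pow_one]
        have h15 : (15:ℤ) ≤ (s13 (18 * d + 12)).1 := by
          rw [show 18 * d + 12 = (18 * d + 11) + 1 by omega]
          exact s13_succ_ge _
        rw [← hk1, hm3] at h15
        norm_num at h15
      · -- r = 13: square test mod 9
        exact (killA 9 ((n:ℤ)^2 - 3*(n:ℤ) + 1) ((n:ℤ)) rfl (186100225 : ZMod 9)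
          (by rw [hk2, (per9 d 13).2, s13v13]; push_cast; ring) (by decide)).elim
      · -- r = 14: square test mod 25
        exact (killA 25 ((n:ℤ)^2 - 3*(n:ℤ) + 1) ((n:ℤ)) rfl (694535495 : ZMod 25)
          (by rw [hk2, (per25 d 14).2, s13v14]; push_cast; ring) (by decide)).elim
      · -- r = 15: square test mod 9
        exact (killA 9 ((n:ℤ)^2 - 3*(n:ℤ) + 1) ((n:ℤ)) rfl (2592041755 : ZMod 9)
          (by rw [hk2, (per9 d 15).2, s13v15]; push_cast; ring) (by decide)).elim
      · -- r = 16: square test mod 17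
        exact (killA 17 ((n:ℤ)^2 - 3*(n:ℤ) + 1) ((n:ℤ)) rfl (9673631525 : ZMod 17)
          (by rw [hk2, (per17 d 16).2, s13v16]; push_cast; ring) (by decide)).elim
      · -- r = 17: square test mod 9
        exact (killA 9 ((n:ℤ)^2 - 3*(n:ℤ) + 1) ((n:ℤ)) rfl (36102484345 : ZMod 9)
          (by rw [hk2, (per9 d 17).2, s13v17]; push_cast; ring) (by decide)).elim
  · intro h
    obtain ⟨hp3, hq2, ha1, hb2⟩ : p = 3 ∧ q = 2 ∧ a = 1 ∧ b = 2 := by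
      simpa [Prod.ext_iff] using h
    subst hp3; subst hq2; subst ha1; subst hb2
    decide
end

section
/- The only solution in primes p, q and positive integers a, b to the equation C(p^a, 4) - C(q^b, 2) = 2 is (p,q,a,b) = (5,3,1,1). -/
lemma split_pow {p u v e : ℕ} (hp : p.Prime) (hu : 0 < u) (hv : 0 < v)
    (he : p^e ∣ u * v) (hns : ¬(p^2 ∣ u ∧ p^2 ∣ v)) :
    p^(e-1) ∣ u ∨ p^(e-1) ∣ v := by
  have hi : p ^ (u.factorization p) ∣ u := Nat.ordProj_dvd u p
  have hj : p ^ (v.factorization p) ∣ v := Nat.ordProj_dvd v p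
  have hsum : e ≤ u.factorization p + v.factorization p := by
    have h1 := (Nat.Prime.pow_dvd_iff_le_factorization hp (Nat.mul_ne_zero hu.ne' hv.ne')).1 he
    rwa [Nat.factorization_mul hu.ne' hv.ne', Finsupp.add_apply] at h1
  rcases le_or_gt (u.factorization p) 1 with h | h
  · right; exact dvd_trans (pow_dvd_pow p (by omega)) hj
  · rcases le_or_gt (v.factorization p) 1 with h' | h'
    · left; exact dvd_trans (pow_dvd_pow p (by omega)) hi
    · exact absurd ⟨dvd_trans (pow_dvd_pow p h) hi, dvd_trans (pow_dvd_pow p h') hj⟩ hns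

lemma aux_pp {p a r : ℕ} (hp : p.Prime) (hr : r.Prime) (ha : 0 < a) (h : p^a = r) : p = r ∧ a = 1 := by
  have hpr : p = r := by
    have : p ∣ r := h ▸ dvd_pow_self p ha.ne'
    exact (Nat.prime_dvd_prime_iff_eq hp hr).1 this
  subst hpr
  exact ⟨rfl, Nat.pow_right_injective hp.two_le (h.trans (pow_one p).symm)⟩

lemma sideU (m c k : ℕ) (hm8 : 8 ≤ m)
    (hEq : m*(c*c) + 14*c + 12 = 12*m)
    (hu : k*k + 7*k + 4 = m*c) : False := by
  have hc3 : c ≤ 3 := by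
    by_contra hc; push_neg at hc
    have h16 : 16 ≤ c*c := by nlinarith
    have : m*16 ≤ m*(c*c) := Nat.mul_le_mul_left m h16
    linarith
  interval_cases c
  · omega
  · omega
  · omega
  · have hm18 : m = 18 := by omega
    subst hm18
    have hk7 : k ≤ 7 := by nlinarith
    interval_cases k <;> omega

lemma sideV (m c k : ℕ) (hm8 : 8 ≤ m)
    (hEq : m*(c*c) + 12 = 12*m + 14*c)
    (hv : k*k + 7*k + 18 = m*c) : False := by
  have hc4 : c ≤ 4 := by
    by_contra hc; push_neg at hc
    have h25 : 25 ≤ c*c := by nlinarith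
    have h1 : m*25 ≤ m*(c*c) := Nat.mul_le_mul_left m h25
    have h2 : 13*m ≤ 14*c := by linarith
    have h3 : m ≤ 2*c := by omega
    have h4 : 8*(c*c) ≤ m*(c*c) := Nat.mul_le_mul_right (c*c) hm8
    have h5 : 8*(c*c) ≤ 38*c := by linarith
    nlinarith
  interval_cases c
  · omega
  · omega
  · omega
  · omega
  · have hm11 : m = 11 := by omega
    subst hm11
    have hk5 : k ≤ 5 := by nlinarith
    interval_cases k <;> omega

lemma sideU7 (d c : ℕ) (hd7 : 7 ≤ d) (hdv : d = 7 ∨ 49 ∣ d)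
    (hEq : d*(c*c) + 14*c + 84 = 588*d) : False := by
  have hc : c ≤ 24 := by
    by_contra hc; push_neg at hc
    have h6 : 625 ≤ c*c := by nlinarith
    have : d*625 ≤ d*(c*c) := Nat.mul_le_mul_left d h6
    nlinarith
  interval_cases c <;> omega

lemma sideV7 (d c : ℕ) (hd7 : 7 ≤ d) (hdv : d = 7 ∨ 49 ∣ d)
    (hEq : d*(c*c) + 84 = 588*d + 14*c) : False := by
  have hc : c ≤ 25 := by
    by_contra hc; push_neg at hc
    have h6 : 676 ≤ c*c := by nlinarith
    have h1 : d*676 ≤ d*(c*c) := Nat.mul_le_mul_left d h6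
    have h2 : 88*d + 84 ≤ 14*c := by linarith
    have h3 : 7*(c*c) ≤ d*(c*c) := Nat.mul_le_mul_right (c*c) hd7
    have h4 : 26*c ≤ c*c := Nat.mul_le_mul_right c hc
    linarith
  interval_cases c <;> omega

theorem stmt_14 (p q a b : ℕ) (hp : p.Prime) (hq : q.Prime) (ha : 0 < a) (hb : 0 < b) :
    (p ^ a).choose 4 = (q ^ b).choose 2 + 2 ↔ (p, q, a, b) = (5, 3, 1, 1) := by
  constructor
  · intro h
    have hN2 : 2 ≤ p^a := le_trans hp.two_le (Nat.le_self_pow ha.ne' p)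
    have hM2 : 2 ≤ q^b := le_trans hq.two_le (Nat.le_self_pow hb.ne' q)
    have h24 : (p^a)*(p^a-1)*(p^a-2)*(p^a-3) = 12*((q^b)*(q^b-1)) + 48 := by
      have h4 : (p^a).descFactorial 4 = 24 * (p^a).choose 4 :=
        Nat.descFactorial_eq_factorial_mul_choose _ 4
      have h2 : (q^b).descFactorial 2 = 2 * (q^b).choose 2 :=
        Nat.descFactorial_eq_factorial_mul_choose _ 2
      have e4 : (p^a).descFactorial 4 = (p^a-3)*((p^a-2)*((p^a-1)*(p^a))) := by
        simp [Nat.descFactorial]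
      have e2 : (q^b).descFactorial 2 = (q^b-1)*(q^b) := by simp [Nat.descFactorial]
      have key : (p^a-3)*((p^a-2)*((p^a-1)*(p^a))) = 24 * ((q^b).choose 2 + 2) := by
        rw [← e4, h4, h]
      have h2' : (q^b-1)*(q^b) = 2 * (q^b).choose 2 := by rw [← e2, h2]
      calc (p^a)*(p^a-1)*(p^a-2)*(p^a-3) = (p^a-3)*((p^a-2)*((p^a-1)*(p^a))) := by ring
        _ = 24 * (q^b).choose 2 + 48 := by rw [key]; ring
        _ = 12*((q^b-1)*(q^b)) + 48 := by rw [h2']; ring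
        _ = 12*((q^b)*(q^b-1)) + 48 := by ring
    have hN5 : 5 ≤ p^a := by
      by_contra hN; push_neg at hN
      obtain ⟨N, hNe⟩ : ∃ N, p^a = N := ⟨_, rfl⟩
      rw [hNe] at h24 hN2 hN
      have hP : 0 ≤ (q^b)*(q^b-1) := Nat.zero_le _
      interval_cases N <;> simp_all <;> linarith
    obtain ⟨k, hk⟩ : ∃ k, p^a = k + 5 := ⟨p^a - 5, by omega⟩
    obtain ⟨l, hl⟩ : ∃ l, q^b = l + 2 := ⟨q^b - 2, by omega⟩
    rw [hk, hl] at h24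
    have h24' : (k+5)*(k+4)*(k+3)*(k+2) = 12*((l+2)*(l+1)) + 48 := by
      have e1 : k+5-1 = k+4 := by omega
      have e2 : k+5-2 = k+3 := by omega
      have e3 : k+5-3 = k+2 := by omega
      have e5 : l+2-1 = l+1 := by omega
      rw [e1, e2, e3, e5] at h24; exact h24
    have hE : (k*k+7*k+4) * ((k*k+7*k+4) + 14) = 12*((l+2)*(l+1)) := by
      zify at h24' ⊢; linear_combination h24'
    by_cases hsmall : l + 2 ≤ 7
    · have hk1 : k ≤ 1 := by
        by_contra hk2; push_neg at hk2
        have hub : (l+2)*(l+1) ≤ 7*6 := Nat.mul_le_mul (by omega) (by omega)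
        nlinarith
      have hl5 : l ≤ 5 := by omega
      have hkl : k = 0 ∧ l = 1 := by
        interval_cases k <;> interval_cases l <;> omega
      obtain ⟨hk0, hl1⟩ := hkl
      subst hk0; subst hl1
      have hp5 : p = 5 ∧ a = 1 := aux_pp hp (by norm_num) ha (by omega)
      have hq3 : q = 3 ∧ b = 1 := aux_pp hq (by norm_num) hb (by omega)
      simp only [Prod.mk.injEq]
      exact ⟨hp5.1, hq3.1, hp5.2, hq3.2⟩
    · exfalso
      push_neg at hsmall
      have hm8 : 8 ≤ l + 2 := hsmall
      have hupos : 0 < k*k+7*k+4 := by positivity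
      have hvpos : 0 < (k*k+7*k+4) + 14 := by positivity
      by_cases hq2 : q = 2
      · subst hq2
        have hb3 : 3 ≤ b := by
          by_contra hbb; push_neg at hbb
          have : 2^b ≤ 2^2 := Nat.pow_le_pow_right (by norm_num) (by omega)
          omega
        have hd2 : 2^(b+2) ∣ (k*k+7*k+4) * ((k*k+7*k+4) + 14) :=
          ⟨3*(l+1), by rw [hE, ← hl, pow_succ, pow_succ]; ring⟩
        have hns : ¬(2^2 ∣ (k*k+7*k+4) ∧ 2^2 ∣ (k*k+7*k+4) + 14) := by
          rintro ⟨ha1, ha2⟩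
          have h14 : (2:ℕ)^2 ∣ 14 := by
            have := Nat.dvd_sub ha2 ha1
            simpa using this
          norm_num at h14
        rcases split_pow Nat.prime_two hupos hvpos hd2 hns with ⟨c, hc⟩ | ⟨c, hc⟩
        · have hc' : k*k+7*k+4 = (l+2)*(2*c) := by
            rw [hc, ← hl]
            have : b + 2 - 1 = b + 1 := by omega
            rw [this, pow_succ]; ring
          rw [hc'] at hE
          have h1 : (l+2) * ((2*c)*((l+2)*(2*c)+14)) = (l+2) * (12*(l+1)) := by
            zify at hE ⊢; linear_combination hE
          have h2 : (2*c)*((l+2)*(2*c)+14) = 12*(l+1) :=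
            Nat.eq_of_mul_eq_mul_left (by omega) h1
          have hEq : (l+2)*((2*c)*(2*c)) + 14*(2*c) + 12 = 12*(l+2) := by
            zify at h2 ⊢; linear_combination h2
          exact sideU (l+2) (2*c) k hm8 hEq hc'
        · have hc' : (k*k+7*k+4) + 14 = (l+2)*(2*c) := by
            rw [hc, ← hl]
            have : b + 2 - 1 = b + 1 := by omega
            rw [this, pow_succ]; ring
          have h1 : (l+2) * ((l+2)*((2*c)*(2*c))) = (l+2) * (12*(l+1) + 14*(2*c)) := by
            zify at hE hc' ⊢
            linear_combination hE - ((l+2)*(2*c) + (k*k+7*k+4)) * hc'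
          have h2 : (l+2)*((2*c)*(2*c)) = 12*(l+1) + 14*(2*c) :=
            Nat.eq_of_mul_eq_mul_left (by omega) h1
          have hEq : (l+2)*((2*c)*(2*c)) + 12 = 12*(l+2) + 14*(2*c) := by linarith
          exact sideV (l+2) (2*c) k hm8 hEq (by linarith)
      · by_cases hq7 : q = 7
        · subst hq7
          have hb2 : 2 ≤ b := by
            by_contra hbb; push_neg at hbb
            have : 7^b ≤ 7^1 := Nat.pow_le_pow_right (by norm_num) (by omega)
            omega
          have hmd : l + 2 = 7 * 7^(b-1) := by
            have h7 : (7:ℕ)^b = 7^(b-1) * 7 := by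
              rw [← pow_succ]; congr 1; omega
            rw [← hl, h7]; ring
          have hd7 : 7 ≤ 7^(b-1) := by
            calc (7:ℕ) = 7^1 := by norm_num
              _ ≤ 7^(b-1) := Nat.pow_le_pow_right (by norm_num) (by omega)
          have hdvv : 7^(b-1) = 7 ∨ 49 ∣ 7^(b-1) := by
            rcases eq_or_lt_of_le hb2 with hbe | hbl
            · left; rw [← hbe]; norm_num
            · right
              have : (49:ℕ) = 7^2 := by norm_num
              rw [this]
              exact pow_dvd_pow 7 (by omega)
          have hd2 : 7^b ∣ (k*k+7*k+4) * ((k*k+7*k+4) + 14) := by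
            rw [hE, hl]; exact ⟨12*(l+1), by ring⟩
          have hns : ¬(7^2 ∣ (k*k+7*k+4) ∧ 7^2 ∣ (k*k+7*k+4) + 14) := by
            rintro ⟨ha1, ha2⟩
            have h14 : (7:ℕ)^2 ∣ 14 := by
              have := Nat.dvd_sub ha2 ha1
              simpa using this
            norm_num at h14
          rcases split_pow (by norm_num) hupos hvpos hd2 hns with ⟨c, hc⟩ | ⟨c, hc⟩
          · rw [hc] at hE
            rw [hmd] at hE
            have h1 : 7^(b-1) * (c*(7^(b-1)*c+14)) = 7^(b-1) * (84*(l+1)) := by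
              zify at hE ⊢; linear_combination hE
            have h2 : c*(7^(b-1)*c+14) = 84*(l+1) :=
              Nat.eq_of_mul_eq_mul_left (by omega) h1
            have h3 : 84*(l+1) + 84 = 588*(7^(b-1)) := by omega
            have hEq : 7^(b-1)*(c*c) + 14*c + 84 = 588*(7^(b-1)) := by
              zify at h2 h3 ⊢; linear_combination h2 + h3
            exact sideU7 (7^(b-1)) c hd7 hdvv hEq
          · have h1 : 7^(b-1) * (7^(b-1)*(c*c)) = 7^(b-1) * (84*(l+1) + 14*c) := by
              zify at hE hc hmd ⊢
              linear_combination hE - (7^(b-1)*c + (k*k+7*k+4)) * hc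
                + (12*(l+1)) * hmd
            have h2 : 7^(b-1)*(c*c) = 84*(l+1) + 14*c :=
              Nat.eq_of_mul_eq_mul_left (by omega) h1
            have h3 : 84*(l+1) + 84 = 588*(7^(b-1)) := by omega
            have hEq : 7^(b-1)*(c*c) + 84 = 588*(7^(b-1)) + 14*c := by omega
            exact sideV7 (7^(b-1)) c hd7 hdvv hEq
        · have hnd : ¬(q ∣ (k*k+7*k+4)) ∨ ¬(q ∣ (k*k+7*k+4) + 14) := by
            by_contra hcon; push_neg at hcon
            obtain ⟨h1, h2⟩ := hcon
            have h14 : q ∣ 14 := by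
              have := Nat.dvd_sub h2 h1
              simpa using this
            have : q ∣ 2 * 7 := by norm_num at h14 ⊢; exact h14
            rcases (Nat.Prime.dvd_mul hq).1 this with hh | hh
            · exact hq2 ((Nat.prime_dvd_prime_iff_eq hq Nat.prime_two).1 hh)
            · exact hq7 ((Nat.prime_dvd_prime_iff_eq hq (by norm_num)).1 hh)
          have hqb : q^b ∣ (k*k+7*k+4) * ((k*k+7*k+4) + 14) := by
            rw [hE, hl]; exact ⟨12*(l+1), by ring⟩
          have hsp : q^b ∣ (k*k+7*k+4) ∨ q^b ∣ (k*k+7*k+4) + 14 := by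
            rcases hnd with h1 | h2
            · right
              exact (((Nat.Prime.coprime_iff_not_dvd hq).2 h1).pow_left b).dvd_of_dvd_mul_left hqb
            · left
              exact (((Nat.Prime.coprime_iff_not_dvd hq).2 h2).pow_left b).dvd_of_dvd_mul_right hqb
          rcases hsp with ⟨c, hc⟩ | ⟨c, hc⟩
          · rw [hl] at hc
            rw [hc] at hE
            have h1 : (l+2) * (c*((l+2)*c+14)) = (l+2) * (12*(l+1)) := by
              zify at hE ⊢; linear_combination hE
            have h2 : c*((l+2)*c+14) = 12*(l+1) :=
              Nat.eq_of_mul_eq_mul_left (by omega) h1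
            have hEq : (l+2)*(c*c) + 14*c + 12 = 12*(l+2) := by
              zify at h2 ⊢; linear_combination h2
            exact sideU (l+2) c k hm8 hEq hc
          · rw [hl] at hc
            have h1 : (l+2) * ((l+2)*(c*c)) = (l+2) * (12*(l+1) + 14*c) := by
              zify at hE hc ⊢
              linear_combination hE - ((l+2)*c + (k*k+7*k+4)) * hc
            have h2 : (l+2)*(c*c) = 12*(l+1) + 14*c :=
              Nat.eq_of_mul_eq_mul_left (by omega) h1
            have hEq : (l+2)*(c*c) + 12 = 12*(l+2) + 14*c := by linarith
            exact sideV (l+2) c k hm8 hEq (by linarith)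
  · rintro heq
    simp only [Prod.mk.injEq] at heq
    obtain ⟨h1, h2, h3, h4⟩ := heq
    subst h1; subst h2; subst h3; subst h4
    decide
end

section
/- There are infinitely many pairs of positive integers (A, B) with A - B = 1 such that the product AB is squarefull (powerful), i.e., every prime dividing AB divides it at least twice. -/
/-- A positive integer is squarefull (powerful) if every prime dividing it
divides it at least twice. -/
def Squarefull (n : ℕ) : Prop := ∀ p : ℕ, p.Prime → p ∣ n → p ^ 2 ∣ n

lemma squarefull_mul_sq {m k : ℕ} (hm : Squarefull m) : Squarefull (m * k ^ 2) := by
  intro p hp hd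
  rcases (Nat.Prime.dvd_mul hp).mp hd with h | h
  · exact dvd_mul_of_dvd_left (hm p hp h) _
  · exact dvd_mul_of_dvd_right (hp.dvd_of_dvd_pow h |> fun hk => pow_dvd_pow_of_dvd hk 2) _

/-- The sequence 8, 4·8·9, ... -/
def f : ℕ → ℕ
  | 0 => 8
  | n + 1 => 4 * f n * (f n + 1)

lemma f_pos : ∀ n, 0 < f n
  | 0 => by norm_num [f]
  | n + 1 => by
    have := f_pos n
    simp only [f]
    positivity

lemma f_squarefull : ∀ n, Squarefull (f n * (f n + 1))
  | 0 => by
    intro p hp hd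
    have h72 : f 0 * (f 0 + 1) = 2 ^ 3 * 3 ^ 2 := by norm_num [f]
    rw [h72] at hd ⊢
    rcases (Nat.Prime.dvd_mul hp).mp hd with h | h
    · have : p = 2 := (Nat.prime_dvd_prime_iff_eq hp Nat.prime_two).mp (hp.dvd_of_dvd_pow h)
      subst this; decide
    · have : p = 3 := (Nat.prime_dvd_prime_iff_eq hp Nat.prime_three).mp (hp.dvd_of_dvd_pow h)
      subst this; decide
  | n + 1 => by
    have key : f (n + 1) * (f (n + 1) + 1)
        = (f n * (f n + 1)) * (2 * (2 * f n + 1)) ^ 2 := by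
      simp only [f]; ring
    rw [key]
    exact squarefull_mul_sq (f_squarefull n)

lemma f_strict : StrictMono f := by
  apply strictMono_nat_of_lt_succ
  intro n
  have h := f_pos n
  calc f n < 4 * f n := by omega
    _ ≤ 4 * f n * (f n + 1) := Nat.le_mul_of_pos_right _ (by omega)
    _ = f (n + 1) := rfl

theorem stmt_15 : {B : ℕ | 0 < B ∧ Squarefull (B * (B + 1))}.Infinite := by
  apply Set.infinite_of_injective_forall_mem (f := f) f_strict.injective
  intro n
  exact ⟨f_pos n, f_squarefull n⟩
end
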